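/- arXiv:1803.10349 — 5 statements merged into one kernel-verified Lean document; each statement's English description precedes it below -/
import Mathlib

section
/- Let 0<p<γ<1 be fixed reals and let α(γ,p) = γ·log(γ/p) + (1−γ)·log((1−γ)/(1−p)). Then there exist a constant C>0 and N₀ ∈ ℕ such that for all N ≥ N₀, e^{−N·α(γ,p) − C·log N} ≤ P(Bin(N,p) ≥ γN) ≤ e^{−N·α(γ,p) + C·log N}. -/
/-- `P(Bin(N,p) = r)`: the probability that a binomial random variable with `N` trials and
success probability `p` equals `r`. -/
noncomputable def binomProb (N : ℕ) (p : ℝ) (r : ℕ) : ℝ :=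
  (N.choose r : ℝ) * p ^ r * (1 - p) ^ (N - r)

/-- `P(Bin(N,p) ≥ γ·N)`: the probability that a binomial random variable with `N` trials and
success probability `p` is at least `γ·N`. -/
noncomputable def binomTailProb (N : ℕ) (p γ : ℝ) : ℝ :=
  ∑ r ∈ Finset.range (N + 1), if γ * (N : ℝ) ≤ (r : ℝ) then binomProb N p r else 0

/-- `α(γ,p) = γ log(γ/p) + (1-γ) log((1-γ)/(1-p))`. -/
noncomputable def alphaQC (γ p : ℝ) : ℝ :=
  γ * Real.log (γ / p) + (1 - γ) * Real.log ((1 - γ) / (1 - p))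

lemma binomProb_nonneg (N r : ℕ) (p : ℝ) (h0 : 0 ≤ p) (h1 : p ≤ 1) :
    0 ≤ binomProb N p r := by
  unfold binomProb
  have : (0:ℝ) ≤ 1 - p := by linarith
  positivity

lemma sum_binomProb (N : ℕ) (p : ℝ) :
    ∑ r ∈ Finset.range (N + 1), binomProb N p r = 1 := by
  have h := add_pow p (1 - p) N
  simp only [add_sub_cancel, one_pow] at h
  rw [eq_comm] at h
  rw [← h]
  apply Finset.sum_congr rfl
  intro r _
  unfold binomProb
  ring

lemma binomProb_step (N k : ℕ) (hk : k < N) (x : ℝ) :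
    binomProb N x (k+1) * (((k:ℝ)+1) * (1 - x)) = binomProb N x k * (((N:ℝ) - k) * x) := by
  unfold binomProb
  have h1 : N - k = (N - (k+1)) + 1 := by omega
  have h2 : ((N.choose (k+1) : ℝ)) * ((k:ℝ)+1) = (N.choose k : ℝ) * ((N:ℝ) - k) := by
    have := Nat.choose_succ_right_eq N k
    have hc : ((N.choose (k+1) * (k+1) : ℕ) : ℝ) = ((N.choose k * (N - k) : ℕ) : ℝ) := by
      rw [this]
    push_cast [Nat.cast_sub hk.le] at hc
    linarith
  rw [h1]
  linear_combination (x^(k+1) * (1-x)^(N-(k+1)+1)) * h2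

lemma max_term (N r : ℕ) (hr1 : 1 ≤ r) (hrN : r < N) :
    (1:ℝ) ≤ ((N:ℝ)+1) * binomProb N ((r:ℝ)/N) r := by
  set x : ℝ := (r:ℝ)/N with hxdef
  have hN0 : (0:ℝ) < N := by exact_mod_cast (by omega : 0 < N)
  have hxN : x * N = r := by rw [hxdef]; field_simp
  have hrR : (1:ℝ) ≤ (r:ℝ) := by exact_mod_cast hr1
  have hrNR : (r:ℝ) < (N:ℝ) := by exact_mod_cast hrN
  have hx0 : 0 < x := div_pos (by linarith) hN0
  have hx1 : x < 1 := by rw [hxdef]; exact (div_lt_one hN0).mpr hrNR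
  set a : ℕ → ℝ := fun k => binomProb N x k with ha
  have hann : ∀ k, 0 ≤ a k := fun k => binomProb_nonneg N k x hx0.le hx1.le
  have hup : ∀ k, k < r → a k ≤ a (k+1) := by
    intro k hk
    have hkR : (k:ℝ) + 1 ≤ (r:ℝ) := by exact_mod_cast hk
    have hid := binomProb_step N k (hk.trans hrN) x
    have hc1 : (0:ℝ) < ((k:ℝ)+1) * (1-x) := by nlinarith
    have hc12 : ((k:ℝ)+1) * (1-x) ≤ ((N:ℝ) - k) * x := by nlinarith
    have h3 : a k * (((k:ℝ)+1) * (1-x)) ≤ a k * (((N:ℝ) - k) * x) :=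
      mul_le_mul_of_nonneg_left hc12 (hann k)
    have : a k * (((k:ℝ)+1) * (1-x)) ≤ a (k+1) * (((k:ℝ)+1) * (1-x)) := by
      rw [hid]; exact h3
    exact le_of_mul_le_mul_right this hc1
  have hdown : ∀ k, r ≤ k → k < N → a (k+1) ≤ a k := by
    intro k hk hkN
    have hkR : (r:ℝ) ≤ (k:ℝ) := by exact_mod_cast hk
    have hid := binomProb_step N k hkN x
    have hc1 : (0:ℝ) < ((k:ℝ)+1) * (1-x) := by nlinarith
    have hc21 : ((N:ℝ) - k) * x ≤ ((k:ℝ)+1) * (1-x) := by nlinarith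
    have h3 : a k * (((N:ℝ) - k) * x) ≤ a k * (((k:ℝ)+1) * (1-x)) :=
      mul_le_mul_of_nonneg_left hc21 (hann k)
    have : a (k+1) * (((k:ℝ)+1) * (1-x)) ≤ a k * (((k:ℝ)+1) * (1-x)) := by
      rw [hid]; exact h3
    exact le_of_mul_le_mul_right this hc1
  have hupind : ∀ j k, k + j ≤ r → a k ≤ a (k + j) := by
    intro j
    induction j with
    | zero => intro k _; simp
    | succ j ih =>
      intro k hk
      have h1 : k + j ≤ r := by omega
      have h2 : k + j < r := by omega
      calc a k ≤ a (k + j) := ih k h1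
        _ ≤ a (k + j + 1) := hup _ h2
  have hdownind : ∀ k, r ≤ k → k ≤ N → a k ≤ a r := by
    intro k hk
    induction k, hk using Nat.le_induction with
    | base => intro _; exact le_refl _
    | succ k hk ih =>
      intro hkN
      have : a (k+1) ≤ a k := hdown k hk (by omega)
      exact this.trans (ih (by omega))
  have key : ∀ k ∈ Finset.range (N+1), a k ≤ a r := by
    intro k hkmem
    have hkN : k ≤ N := by simpa using Nat.lt_succ_iff.mp (Finset.mem_range.mp hkmem)
    rcases le_or_gt k r with h | h
    · have := hupind (r - k) k (by omega)
      simpa [Nat.add_sub_cancel' h] using this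
    · exact hdownind k h.le hkN
  have hsum := sum_binomProb N x
  have hle : ∑ k ∈ Finset.range (N+1), a k ≤ (Finset.range (N+1)).card • a r :=
    Finset.sum_le_card_nsmul _ _ _ key
  rw [hsum, Finset.card_range, nsmul_eq_mul] at hle
  push_cast at hle
  exact hle

lemma tail_upper (p γ : ℝ) (hp : 0 < p) (hpγ : p < γ) (hγ : γ < 1) (N : ℕ) :
    binomTailProb N p γ ≤ Real.exp (-(N:ℝ) * alphaQC γ p) := by
  have hp1 : p < 1 := hpγ.trans hγ
  have h1p : 0 < 1 - p := by linarith
  have h1γ : 0 < 1 - γ := by linarith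
  have hγ0 : 0 < γ := hp.trans hpγ
  set t : ℝ := γ * (1 - p) / (p * (1 - γ)) with htdef
  have ht0 : 0 < t := by positivity
  have ht1 : 1 ≤ t := by
    rw [htdef, le_div_iff₀ (by positivity)]
    nlinarith
  set E : ℝ := Real.log t with hEdef
  have hE0 : 0 ≤ E := Real.log_nonneg ht1
  have htE : t = Real.exp E := (Real.exp_log ht0).symm
  set K : ℝ := Real.exp (-(γ * N) * E) with hKdef
  have hterm : ∀ r ∈ Finset.range (N+1),
      (if γ * (N:ℝ) ≤ (r:ℝ) then binomProb N p r else 0)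
        ≤ (N.choose r : ℝ) * (p * t) ^ r * (1 - p) ^ (N - r) * K := by
    intro r _
    have hRHS :
        (N.choose r : ℝ) * (p * t) ^ r * (1 - p) ^ (N - r) * K
          = binomProb N p r * Real.exp (((r:ℝ) - γ * N) * E) := by
      unfold binomProb
      rw [hKdef, mul_pow, htE, ← Real.exp_nat_mul,
        show ((r:ℝ) - γ * N) * E = (r:ℝ) * E + -(γ * N) * E by ring, Real.exp_add]
      ring
    rw [hRHS]
    split_ifs with h
    · nth_rewrite 1 [show binomProb N p r = binomProb N p r * 1 by ring]
      apply mul_le_mul_of_nonneg_left _ (by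
        unfold binomProb
        exact mul_nonneg (mul_nonneg (Nat.cast_nonneg _) (pow_nonneg hp.le _))
          (pow_nonneg h1p.le _))
      exact Real.one_le_exp (mul_nonneg (by linarith) hE0)
    · exact mul_nonneg (mul_nonneg (mul_nonneg (Nat.cast_nonneg _)
        (pow_nonneg (by positivity) _)) (pow_nonneg h1p.le _)) (Real.exp_pos _).le
  have hsum : binomTailProb N p γ
      ≤ ∑ r ∈ Finset.range (N+1), (N.choose r : ℝ) * (p * t) ^ r * (1 - p) ^ (N - r) * K :=
    Finset.sum_le_sum hterm
  have hclosed : ∑ r ∈ Finset.range (N+1), (N.choose r : ℝ) * (p * t) ^ r * (1 - p) ^ (N - r) * K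
      = (p * t + (1 - p)) ^ N * K := by
    rw [← Finset.sum_mul, add_pow]
    congr 1
    apply Finset.sum_congr rfl
    intro r _
    ring
  have hval : p * t + (1 - p) = (1 - p) / (1 - γ) := by
    rw [htdef]; field_simp; ring
  have hlogE : E = Real.log γ + Real.log (1 - p) - (Real.log p + Real.log (1 - γ)) := by
    rw [hEdef, htdef, Real.log_div (by positivity) (by positivity),
      Real.log_mul (ne_of_gt hγ0) (ne_of_gt h1p), Real.log_mul (ne_of_gt hp) (ne_of_gt h1γ)]
  have hfinal : (p * t + (1 - p)) ^ N * K = Real.exp (-(N:ℝ) * alphaQC γ p) := by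
    rw [hval, hKdef]
    rw [show ((1 - p) / (1 - γ)) ^ N = Real.exp ((N:ℝ) * Real.log ((1-p)/(1-γ))) by
      rw [Real.exp_nat_mul, Real.exp_log (by positivity)]]
    rw [← Real.exp_add]
    congr 1
    unfold alphaQC
    rw [hlogE, Real.log_div (ne_of_gt h1p) (ne_of_gt h1γ),
      Real.log_div (ne_of_gt hγ0) (ne_of_gt hp), Real.log_div (ne_of_gt h1γ) (ne_of_gt h1p)]
    ring
  calc binomTailProb N p γ ≤ _ := hsum
    _ = _ := hclosed
    _ = _ := hfinal

lemma kl_compare (p γ x : ℝ) (hp : 0 < p) (hpγ : p < γ) (hγ : γ < 1)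
    (hγx : γ ≤ x) (hx1 : x ≤ 1) (hux : (1 - γ)/2 ≤ 1 - x) :
    x * Real.log (x / p) + (1 - x) * Real.log ((1 - x) / (1 - p))
      ≤ alphaQC γ p
        + (x - γ) * ((Real.log (1/p) + 1) + Real.log (2 * (1 - p) / (1 - γ))) := by
  have hγ0 : 0 < γ := hp.trans hpγ
  have hx0 : 0 < x := lt_of_lt_of_le hγ0 hγx
  have h1γ : 0 < 1 - γ := by linarith
  have h1x : 0 < 1 - x := by linarith
  have h1p : 0 < 1 - p := by linarith [hpγ.trans_le hγ.le]
  have hδ0 : 0 ≤ x - γ := by linarith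
  -- expand logs
  rw [Real.log_div (ne_of_gt hx0) (ne_of_gt hp),
    Real.log_div (ne_of_gt h1x) (ne_of_gt h1p),
    Real.log_div (by positivity) (ne_of_gt h1γ),
    Real.log_mul (by norm_num) (ne_of_gt h1p), one_div, Real.log_inv]
  unfold alphaQC
  rw [Real.log_div (ne_of_gt hγ0) (ne_of_gt hp),
    Real.log_div (ne_of_gt h1γ) (ne_of_gt h1p)]
  -- key facts
  have f1 : Real.log x ≤ 0 := Real.log_nonpos hx0.le hx1
  have f2 : γ * (Real.log x - Real.log γ) ≤ x - γ := by
    have h := Real.log_le_sub_one_of_pos (show 0 < x/γ by positivity)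
    rw [Real.log_div (ne_of_gt hx0) (ne_of_gt hγ0)] at h
    have := mul_le_mul_of_nonneg_left h hγ0.le
    calc γ * (Real.log x - Real.log γ) ≤ γ * (x/γ - 1) := this
      _ = x - γ := by field_simp
  have f3 : Real.log (1-x) ≤ Real.log (1-γ) := Real.log_le_log h1x (by linarith)
  have f4 : Real.log (1-γ) - Real.log 2 ≤ Real.log (1-x) := by
    have h := Real.log_le_log (by positivity : (0:ℝ) < (1-γ)/2) hux
    rw [Real.log_div (ne_of_gt h1γ) (by norm_num)] at h
    linarith
  nlinarith [mul_nonpos_of_nonneg_of_nonpos hδ0 f1,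
    mul_nonpos_of_nonneg_of_nonpos (by linarith : (0:ℝ) ≤ 1 - γ)
      (by linarith : Real.log (1-x) - Real.log (1-γ) ≤ 0),
    mul_nonpos_of_nonneg_of_nonpos hδ0
      (by linarith : Real.log (1-γ) - Real.log 2 - Real.log (1-x) ≤ 0)]

set_option maxHeartbeats 1000000 in
lemma tail_lower (p γ : ℝ) (hp : 0 < p) (hpγ : p < γ) (hγ : γ < 1) (N : ℕ)
    (hNγ : 2 / (1-γ) ≤ (N:ℝ)) :
    Real.exp (-(N:ℝ) * alphaQC γ p
        - ((Real.log (1/p) + 1) + Real.log (2 * (1 - p) / (1 - γ)))) / ((N:ℝ)+1)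
      ≤ binomTailProb N p γ := by
  set L : ℝ := (Real.log (1/p) + 1) + Real.log (2 * (1 - p) / (1 - γ)) with hLdef
  clear_value L
  have hγ0 : 0 < γ := hp.trans hpγ
  have h1γ : 0 < 1 - γ := by linarith
  have h1p : 0 < 1 - p := by linarith [hpγ.trans_le hγ.le]
  have hp1 : p < 1 := by linarith
  have hNR : (2:ℝ) ≤ (N:ℝ) * (1-γ) := by
    rw [div_le_iff₀ h1γ] at hNγ; linarith
  have hN0 : (0:ℝ) < N := by nlinarith
  have hγN0 : 0 < γ * (N:ℝ) := by positivity
  obtain ⟨r₀, hr₀def⟩ : ∃ r₀ : ℕ, r₀ = ⌈γ * (N:ℝ)⌉₊ := ⟨_, rfl⟩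
  have hr0ge : γ * (N:ℝ) ≤ (r₀:ℝ) := hr₀def ▸ Nat.le_ceil _
  have hr0lt : (r₀:ℝ) < γ * (N:ℝ) + 1 := hr₀def ▸ Nat.ceil_lt_add_one hγN0.le
  have hr01 : 1 ≤ r₀ := hr₀def ▸ Nat.ceil_pos.mpr hγN0
  have hr0N : r₀ < N := by
    have : (r₀:ℝ) < (N:ℝ) := by nlinarith
    exact_mod_cast this
  have hr0leN : r₀ ≤ N := hr0N.le
  obtain ⟨x, hxdef⟩ : ∃ x : ℝ, x = (r₀:ℝ) / N := ⟨_, rfl⟩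
  have hx0 : 0 < x := by rw [hxdef]; positivity
  have hxN : x * N = r₀ := by rw [hxdef]; field_simp
  have hγx : γ ≤ x := by
    rw [hxdef, le_div_iff₀ hN0]; linarith
  have hx1 : x ≤ 1 := by
    rw [hxdef, div_le_one hN0]; exact_mod_cast hr0leN
  have hux : (1 - γ)/2 ≤ 1 - x := by
    have hδN : (N:ℝ) * (x - γ) ≤ 1 := by nlinarith
    nlinarith
  -- step 1: tail ≥ single term
  have hstep1 : binomProb N p r₀ ≤ binomTailProb N p γ := by
    unfold binomTailProb
    refine le_trans (le_of_eq ?_) (Finset.single_le_sum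
      (f := fun (r : ℕ) => if γ * (N:ℝ) ≤ (r:ℝ) then binomProb N p r else 0)
      (fun i _ => ?_) (Finset.mem_range.mpr (Nat.lt_succ_of_le hr0leN)))
    · simp only [if_pos hr0ge]
    · split_ifs
      · exact binomProb_nonneg N i p hp.le hp1.le
      · exact le_refl 0
  -- step 2: single term ≥ exp(-N g(x)) / (N+1)
  have h1x : 0 < 1 - x := by linarith
  have hfac : binomProb N p r₀
      = binomProb N x r₀ * ((p/x) ^ r₀ * ((1-p)/(1-x)) ^ (N - r₀)) := by
    unfold binomProb
    rw [div_pow, div_pow]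
    field_simp
  have hQpos : (0:ℝ) < (p/x) ^ r₀ * ((1-p)/(1-x)) ^ (N - r₀) := by positivity
  have hmax : (1:ℝ) ≤ ((N:ℝ)+1) * binomProb N x r₀ := by
    rw [hxdef]; exact max_term N r₀ hr01 hr0N
  have hstep2 : (1 / ((N:ℝ)+1)) * ((p/x) ^ r₀ * ((1-p)/(1-x)) ^ (N - r₀))
      ≤ binomProb N p r₀ := by
    rw [hfac]
    apply mul_le_mul_of_nonneg_right _ hQpos.le
    rw [div_le_iff₀ (by positivity), mul_comm]
    exact hmax
  -- step 3: write Q as exp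
  have hQexp : (p/x) ^ r₀ * ((1-p)/(1-x)) ^ (N - r₀)
      = Real.exp ((r₀:ℝ) * Real.log (p/x) + ((N - r₀ : ℕ):ℝ) * Real.log ((1-p)/(1-x))) := by
    rw [Real.exp_add, Real.exp_nat_mul, Real.exp_nat_mul,
      Real.exp_log (by positivity), Real.exp_log (by positivity)]
  -- step 4: exponent bound
  have hcast : ((N - r₀ : ℕ):ℝ) = (N:ℝ) - (r₀:ℝ) := Nat.cast_sub hr0leN
  have hkl := kl_compare p γ x hp hpγ hγ hγx hx1 hux
  have hδN : (N:ℝ) * (x - γ) ≤ 1 := by nlinarith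
  have hL0 : 0 < L := by
    have hinv : 1 < 1/p := by rw [lt_div_iff₀ hp]; linarith
    have l1 : 0 < Real.log (1/p) := Real.log_pos hinv
    have l2 : 0 ≤ Real.log (2 * (1 - p) / (1 - γ)) := by
      apply Real.log_nonneg
      rw [le_div_iff₀ h1γ]; linarith
    rw [hLdef]; linarith
  have hexpo : -(N:ℝ) * alphaQC γ p - L
      ≤ (r₀:ℝ) * Real.log (p/x) + ((N - r₀ : ℕ):ℝ) * Real.log ((1-p)/(1-x)) := by
    have e1 : Real.log (p/x) = -Real.log (x/p) := by
      rw [← Real.log_inv]; congr 1; field_simp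
    have e2 : Real.log ((1-p)/(1-x)) = -Real.log ((1-x)/(1-p)) := by
      rw [← Real.log_inv]; congr 1; field_simp
    rw [hcast, e1, e2]
    have hr0x : (r₀:ℝ) = (N:ℝ) * x := by rw [← hxN]; ring
    have hNx : (N:ℝ) - (r₀:ℝ) = (N:ℝ) * (1-x) := by rw [hr0x]; ring
    rw [hr0x]
    rw [← hLdef] at hkl
    have h5 := mul_le_mul_of_nonneg_left hkl hN0.le
    have h6 := mul_le_mul_of_nonneg_right hδN hL0.le
    ring_nf at h5 h6 ⊢
    linarith
  -- assemble
  calc Real.exp (-(N:ℝ) * alphaQC γ p - L) / ((N:ℝ)+1)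
      = (1 / ((N:ℝ)+1)) * Real.exp (-(N:ℝ) * alphaQC γ p - L) := by ring
    _ ≤ (1 / ((N:ℝ)+1)) * ((p/x) ^ r₀ * ((1-p)/(1-x)) ^ (N - r₀)) := by
        apply mul_le_mul_of_nonneg_left _ (by positivity)
        rw [hQexp]
        exact Real.exp_le_exp.mpr hexpo
    _ ≤ binomProb N p r₀ := hstep2
    _ ≤ binomTailProb N p γ := hstep1

/-- For fixed `0 < p < γ < 1`,
`P(Bin(N,p) ≥ γN) = e^{−Nα(γ,p) + O(log N)}`. -/
theorem binomProb_tail_asymptotics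
    (p γ : ℝ) (hp : 0 < p) (hpγ : p < γ) (hγ : γ < 1) :
    ∃ C > 0, ∃ N₀ : ℕ, ∀ N ≥ N₀,
      Real.exp (-(N : ℝ) * alphaQC γ p - C * Real.log N)
          ≤ binomTailProb N p γ ∧
        binomTailProb N p γ
          ≤ Real.exp (-(N : ℝ) * alphaQC γ p + C * Real.log N) := by
  have hγ0 : 0 < γ := hp.trans hpγ
  have h1γ : 0 < 1 - γ := by linarith
  have hp1 : p < 1 := by linarith
  have h1p : 0 < 1 - p := by linarith
  set L : ℝ := (Real.log (1/p) + 1) + Real.log (2 * (1 - p) / (1 - γ)) with hLdef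
  clear_value L
  have hL0 : 0 < L := by
    have hinv : 1 < 1/p := by rw [lt_div_iff₀ hp]; linarith
    have l1 : 0 < Real.log (1/p) := Real.log_pos hinv
    have l2 : 0 ≤ Real.log (2 * (1 - p) / (1 - γ)) := by
      apply Real.log_nonneg
      rw [le_div_iff₀ h1γ]; linarith
    rw [hLdef]; linarith
  refine ⟨L + 2, by linarith, max 3 ⌈(2:ℝ)/(1-γ)⌉₊, fun N hN => ?_⟩
  have hN3 : 3 ≤ N := le_trans (le_max_left _ _) hN
  have hN3R : (3:ℝ) ≤ (N:ℝ) := by exact_mod_cast hN3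
  have hN0 : (0:ℝ) < N := by linarith
  have hNγ : 2/(1-γ) ≤ (N:ℝ) := by
    refine le_trans (Nat.le_ceil _) ?_
    exact_mod_cast le_trans (le_max_right _ _) hN
  have hlogN : 1 ≤ Real.log N := by
    rw [Real.le_log_iff_exp_le hN0]
    have := Real.exp_one_lt_d9
    linarith
  constructor
  · -- lower bound
    refine le_trans ?_ (tail_lower p γ hp hpγ hγ N hNγ)
    rw [← hLdef]
    rw [show ((N:ℝ)+1) = Real.exp (Real.log ((N:ℝ)+1)) from (Real.exp_log (by positivity)).symm,
      ← Real.exp_sub]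
    apply Real.exp_le_exp.mpr
    have h1 : Real.log ((N:ℝ)+1) ≤ 2 * Real.log N := by
      have hle : (N:ℝ)+1 ≤ (N:ℝ)^2 := by nlinarith
      calc Real.log ((N:ℝ)+1) ≤ Real.log ((N:ℝ)^2) := Real.log_le_log (by positivity) hle
        _ = 2 * Real.log N := by rw [← Real.rpow_natCast (N:ℝ) 2, Real.log_rpow hN0]; norm_num
    have h2 : L ≤ L * Real.log N := by nlinarith
    nlinarith
  · -- upper bound
    refine le_trans (tail_upper p γ hp hpγ hγ N) (Real.exp_le_exp.mpr ?_)
    nlinarith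
end

section
/- Let 0<p<γ<1 and ε>0 be fixed reals and let α(γ,p) = γ·log(γ/p) + (1−γ)·log((1−γ)/(1−p)). Then, with probability tending to 1 as n → ∞, ω_γ(G_{n,p}) < (2/α(γ,p))·(log n − log log n + log(e·α(γ,p)/2)) + 1 + ε. -/
open MeasureTheory Filter
open scoped ENNReal

/-- Bernoulli measure with success probability `p` on `Bool`. -/
noncomputable def bernoulliMeasure (p : ℝ) : Measure Bool :=
  (PMF.bernoulli (min (Real.toNNReal p) 1) (min_le_right _ _)).toMeasure

instance (p : ℝ) : IsProbabilityMeasure (bernoulliMeasure p) :=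
  PMF.toMeasure.isProbabilityMeasure _

/-- The binomial random graph `G_{n,p}` on vertex set `Fin n`, encoded as a product
Bernoulli measure on edge-indicator functions `Sym2 (Fin n) → Bool` (the values on
diagonal pairs are irrelevant dummies: only non-diagonal pairs are counted as edges). -/
noncomputable def gnp (n : ℕ) (p : ℝ) : Measure (Sym2 (Fin n) → Bool) :=
  Measure.pi fun _ => bernoulliMeasure p

/-- The number of edges of the graph encoded by `ω` with both endpoints in `A`. -/
def edgesIn {n : ℕ} (ω : Sym2 (Fin n) → Bool) (A : Finset (Fin n)) : ℕ :=
  (A.sym2.filter fun e => ¬ e.IsDiag ∧ ω e = true).card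

/-- `ω_γ(G)`: the largest integer `k` such that the graph encoded by `ω` has a `k`-vertex
subset inducing at least `γ * (k choose 2)` edges. -/
noncomputable def omegaGamma (γ : ℝ) {n : ℕ} (ω : Sym2 (Fin n) → Bool) : ℕ :=
  sSup {k | ∃ A : Finset (Fin n), A.card = k ∧ γ * (k.choose 2 : ℝ) ≤ (edgesIn ω A : ℝ)}

instance (n : ℕ) (p : ℝ) : IsProbabilityMeasure (gnp n p) := by
  unfold gnp; infer_instance

section QC

variable {p γ : ℝ}

lemma qc_alpha_pos (hp : 0 < p) (hpγ : p < γ) (hγ : γ < 1) : 0 < alphaQC γ p := by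
  have hγ0 : 0 < γ := hp.trans hpγ
  have h1γ : 0 < 1 - γ := by linarith
  have h1p : 0 < 1 - p := by linarith
  have h1 : Real.log (p / γ) < p / γ - 1 :=
    Real.log_lt_sub_one_of_pos (by positivity) (by
      intro h
      have : p = γ := by field_simp at h; linarith
      linarith)
  have h2 : Real.log ((1 - p) / (1 - γ)) < (1 - p) / (1 - γ) - 1 :=
    Real.log_lt_sub_one_of_pos (by positivity) (by
      intro h
      have : 1 - p = 1 - γ := by field_simp at h; linarith
      linarith)
  have e1 : Real.log (γ / p) = - Real.log (p / γ) := by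
    rw [← Real.log_inv, inv_div]
  have e2 : Real.log ((1 - γ) / (1 - p)) = - Real.log ((1 - p) / (1 - γ)) := by
    rw [← Real.log_inv, inv_div]
  have g1 : γ * (p / γ - 1) = p - γ := by field_simp
  have g2 : (1 - γ) * ((1 - p) / (1 - γ) - 1) = γ - p := by field_simp; ring
  unfold alphaQC
  rw [e1, e2]
  nlinarith [mul_lt_mul_of_pos_left h1 hγ0, mul_lt_mul_of_pos_left h2 h1γ]

lemma qc_theta_gt (hp : 0 < p) (hpγ : p < γ) (hγ : γ < 1) :
    1 < γ * (1 - p) / (p * (1 - γ)) := by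
  have h1γ : 0 < 1 - γ := by linarith
  rw [lt_div_iff₀ (by positivity)]
  nlinarith

lemma qc_alpha_eq (hp : 0 < p) (hpγ : p < γ) (hγ : γ < 1) :
    alphaQC γ p = γ * Real.log (γ * (1 - p) / (p * (1 - γ))) - Real.log ((1 - p) / (1 - γ)) := by
  have hγ0 : 0 < γ := hp.trans hpγ
  have h1γ : 0 < 1 - γ := by linarith
  have h1p : 0 < 1 - p := by linarith
  have l1 : Real.log (γ / p) = Real.log γ - Real.log p :=
    Real.log_div (by positivity) (by positivity)
  have l2 : Real.log ((1 - γ) / (1 - p)) = Real.log (1 - γ) - Real.log (1 - p) :=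
    Real.log_div (by positivity) (by positivity)
  have l3 : Real.log (γ * (1 - p) / (p * (1 - γ)))
      = Real.log γ + Real.log (1 - p) - (Real.log p + Real.log (1 - γ)) := by
    rw [Real.log_div (by positivity) (by positivity), Real.log_mul (by positivity) (by positivity),
      Real.log_mul (by positivity) (by positivity)]
  have l4 : Real.log ((1 - p) / (1 - γ)) = Real.log (1 - p) - Real.log (1 - γ) :=
    Real.log_div (by positivity) (by positivity)
  unfold alphaQC
  rw [l1, l2, l3, l4]
  ring

lemma qc_chernoff (hp : 0 < p) (hpγ : p < γ) (hγ : γ < 1)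
    {ι : Type*} [DecidableEq ι] (E : Finset ι) :
    ∑ T ∈ E.powerset.filter (fun T => γ * (E.card : ℝ) ≤ (T.card : ℝ)),
      p ^ T.card * (1 - p) ^ (E.card - T.card)
      ≤ Real.exp (-(alphaQC γ p) * E.card) := by
  have hγ0 : 0 < γ := hp.trans hpγ
  have h1γ : 0 < 1 - γ := by linarith
  have h1p : 0 < 1 - p := by linarith
  set θ : ℝ := γ * (1 - p) / (p * (1 - γ)) with hθdef
  have hθ : 1 < θ := qc_theta_gt hp hpγ hγ
  have hθ0 : 0 < θ := by linarith
  set m : ℕ := E.card with hm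
  have step1 : ∀ T ∈ E.powerset.filter (fun T => γ * (m : ℝ) ≤ (T.card : ℝ)),
      p ^ T.card * (1 - p) ^ (m - T.card)
        ≤ Real.exp (-(γ * m * Real.log θ)) * ((θ * p) ^ T.card * (1 - p) ^ (m - T.card)) := by
    intro T hT
    rw [Finset.mem_filter] at hT
    have hle : γ * (m : ℝ) ≤ (T.card : ℝ) := hT.2
    have h1 : Real.exp (γ * m * Real.log θ) ≤ θ ^ T.card := by
      have h := Real.rpow_le_rpow_of_exponent_le hθ.le hle
      rw [Real.rpow_natCast] at h
      calc Real.exp (γ * m * Real.log θ) = θ ^ (γ * (m : ℝ)) := by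
            rw [Real.rpow_def_of_pos hθ0]; ring_nf
        _ ≤ θ ^ T.card := h
    have h2 : (1 : ℝ) ≤ Real.exp (-(γ * m * Real.log θ)) * θ ^ T.card := by
      rw [Real.exp_neg]
      rw [inv_mul_eq_div, le_div_iff₀ (Real.exp_pos _)]
      simpa using h1
    calc p ^ T.card * (1 - p) ^ (m - T.card)
        = 1 * (p ^ T.card * (1 - p) ^ (m - T.card)) := by ring
      _ ≤ (Real.exp (-(γ * m * Real.log θ)) * θ ^ T.card) *
            (p ^ T.card * (1 - p) ^ (m - T.card)) := by
          apply mul_le_mul_of_nonneg_right h2 (by positivity)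
      _ = Real.exp (-(γ * m * Real.log θ)) * ((θ * p) ^ T.card * (1 - p) ^ (m - T.card)) := by
          rw [mul_pow]; ring
  have step2 : ∑ T ∈ E.powerset, (θ * p) ^ T.card * (1 - p) ^ (m - T.card)
      = (θ * p + (1 - p)) ^ m := by
    rw [← Finset.prod_const (θ * p + (1 - p)) (s := E), Finset.prod_add]
    refine Finset.sum_congr rfl fun T hT => ?_
    rw [Finset.mem_powerset] at hT
    rw [Finset.prod_const, Finset.prod_const, Finset.card_sdiff_of_subset hT]
  have hsum : ∑ T ∈ E.powerset.filter (fun T => γ * (m : ℝ) ≤ (T.card : ℝ)),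
      p ^ T.card * (1 - p) ^ (m - T.card)
      ≤ Real.exp (-(γ * m * Real.log θ)) * (θ * p + (1 - p)) ^ m := by
    calc ∑ T ∈ E.powerset.filter (fun T => γ * (m : ℝ) ≤ (T.card : ℝ)),
        p ^ T.card * (1 - p) ^ (m - T.card)
        ≤ ∑ T ∈ E.powerset.filter (fun T => γ * (m : ℝ) ≤ (T.card : ℝ)),
            Real.exp (-(γ * m * Real.log θ)) * ((θ * p) ^ T.card * (1 - p) ^ (m - T.card)) :=
          Finset.sum_le_sum step1
      _ ≤ ∑ T ∈ E.powerset,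
            Real.exp (-(γ * m * Real.log θ)) * ((θ * p) ^ T.card * (1 - p) ^ (m - T.card)) := by
          apply Finset.sum_le_sum_of_subset_of_nonneg (Finset.filter_subset _ _)
          intro T _ _
          positivity
      _ = Real.exp (-(γ * m * Real.log θ)) * (θ * p + (1 - p)) ^ m := by
          rw [← Finset.mul_sum, step2]
  have hkey : θ * p + (1 - p) = (1 - p) / (1 - γ) := by
    rw [hθdef]; field_simp; ring
  have hfin : Real.exp (-(γ * m * Real.log θ)) * (θ * p + (1 - p)) ^ m
      = Real.exp (-(alphaQC γ p) * m) := by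
    rw [hkey, ← Real.exp_log (x := (1 - p) / (1 - γ)) (by positivity), ← Real.exp_nat_mul,
      ← Real.exp_add, qc_alpha_eq hp hpγ hγ, ← hθdef]
    ring_nf
  rw [← hfin]
  exact hsum

lemma bern_singleton (hp : 0 < p) (hp1 : p < 1) (b : Bool) :
    bernoulliMeasure p {b} = ENNReal.ofReal (if b then p else 1 - p) := by
  have hmin : min (Real.toNNReal p) 1 = Real.toNNReal p :=
    min_eq_left (Real.toNNReal_le_one.2 hp1.le)
  rw [bernoulliMeasure, PMF.toMeasure_apply_singleton _ _ (measurableSet_singleton b),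
    PMF.bernoulli_apply, hmin]
  cases b with
  | true => simp; rfl
  | false =>
    show ((1 - Real.toNNReal p : NNReal) : ℝ≥0∞) = ENNReal.ofReal (1 - p)
    rw [ENNReal.coe_sub, ENNReal.coe_one]
    show 1 - ENNReal.ofReal p = ENNReal.ofReal (1 - p)
    rw [ENNReal.ofReal_sub _ hp.le, ENNReal.ofReal_one]

lemma gnp_cylinder (hp : 0 < p) (hp1 : p < 1) (n : ℕ) (S : Finset (Sym2 (Fin n)))
    (f : Sym2 (Fin n) → Bool) :
    gnp n p {ω | ∀ e ∈ S, ω e = f e}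
      = ∏ e ∈ S, ENNReal.ofReal (if f e then p else 1 - p) := by
  have hset : {ω : Sym2 (Fin n) → Bool | ∀ e ∈ S, ω e = f e}
      = Set.pi Set.univ (fun e => if e ∈ S then {f e} else Set.univ) := by
    ext ω
    simp only [Set.mem_setOf_eq, Set.mem_pi, Set.mem_univ, true_implies]
    constructor
    · intro h e
      split_ifs with he
      · simp [h e he]
      · trivial
    · intro h e he
      have := h e
      rw [if_pos he] at this
      simpa using this
  rw [gnp, hset, Measure.pi_pi]
  have : ∀ e : Sym2 (Fin n), bernoulliMeasure p (if e ∈ S then {f e} else Set.univ)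
      = if e ∈ S then ENNReal.ofReal (if f e then p else 1 - p) else 1 := by
    intro e
    by_cases he : e ∈ S
    · rw [if_pos he, if_pos he]; exact bern_singleton hp hp1 (f e)
    · rw [if_neg he, if_neg he]; exact measure_univ
  rw [Finset.prod_congr rfl fun e _ => this e, Finset.prod_ite_mem, Finset.univ_inter]

lemma card_offdiag {V : Type*} [DecidableEq V] (A : Finset V) :
    (A.sym2.filter fun e => ¬ e.IsDiag).card = A.card.choose 2 := by
  have hdiag : A.sym2.filter (fun e => e.IsDiag) = A.image Sym2.diag := by
    ext e
    induction e with
    | _ x y =>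
      simp only [Finset.mem_filter, Finset.mk_mem_sym2_iff, Sym2.mk_isDiag_iff,
        Finset.mem_image]
      constructor
      · rintro ⟨⟨hx, hy⟩, rfl⟩
        exact ⟨x, hx, rfl⟩
      · rintro ⟨a, ha, h⟩
        rw [Sym2.diag] at h; replace h := (Sym2.mk_eq_mk_iff (p := (a, a)) (q := (x, y))).1 h
        obtain ⟨rfl, rfl⟩ : a = x ∧ a = y := by
          rcases h with h | h <;> simp [Prod.ext_iff] at h <;> tauto
        exact ⟨⟨ha, ha⟩, rfl⟩
  have hcard_diag : (A.sym2.filter (fun e => e.IsDiag)).card = A.card := by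
    rw [hdiag, Finset.card_image_of_injective _ Sym2.diag_injective]
  have htot := Finset.card_filter_add_card_filter_not
    (s := A.sym2) (p := fun e => e.IsDiag)
  have hsym2 : A.sym2.card = (A.card + 1).choose 2 := Finset.card_sym2 A
  have hch : (A.card + 1).choose 2 = A.card.choose 2 + A.card := by
    rw [Nat.choose_succ_succ]
    simp [Nat.choose_one_right, Nat.add_comm]
  omega

lemma gnp_A_bound (hp : 0 < p) (hpγ : p < γ) (hγ : γ < 1)
    (n : ℕ) (A : Finset (Fin n)) (k : ℕ) (hA : A.card = k) :
    gnp n p {ω | γ * (k.choose 2 : ℝ) ≤ (edgesIn ω A : ℝ)}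
      ≤ ENNReal.ofReal (Real.exp (-(alphaQC γ p) * (k.choose 2 : ℕ))) := by
  have hp1 : p < 1 := hpγ.trans hγ
  have h1p : (0:ℝ) ≤ 1 - p := by linarith
  set E := A.sym2.filter (fun e => ¬ e.IsDiag) with hE
  have hEcard : E.card = k.choose 2 := by rw [hE, card_offdiag, hA]
  set F := E.powerset.filter (fun T => γ * (E.card : ℝ) ≤ (T.card : ℝ)) with hF
  have hsub : {ω : Sym2 (Fin n) → Bool | γ * (k.choose 2 : ℝ) ≤ (edgesIn ω A : ℝ)}
      ⊆ ⋃ T ∈ F, {ω : Sym2 (Fin n) → Bool | ∀ e ∈ E, ω e = decide (e ∈ T)} := by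
    intro ω hω
    simp only [Set.mem_setOf_eq] at hω
    have hTcard : (E.filter (fun e => ω e = true)).card = edgesIn ω A := by
      rw [hE, edgesIn, Finset.filter_filter]
    have hmemF : E.filter (fun e => ω e = true) ∈ F := by
      rw [hF, Finset.mem_filter, Finset.mem_powerset]
      refine ⟨Finset.filter_subset _ _, ?_⟩
      rw [hTcard, hEcard]
      exact hω
    refine Set.mem_biUnion hmemF ?_
    intro e he
    cases hb : ω e with
    | true => simp [Finset.mem_filter, he, hb]
    | false => simp [Finset.mem_filter, he, hb]
  calc gnp n p {ω | γ * (k.choose 2 : ℝ) ≤ (edgesIn ω A : ℝ)}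
      ≤ gnp n p (⋃ T ∈ F, {ω : Sym2 (Fin n) → Bool | ∀ e ∈ E, ω e = decide (e ∈ T)}) :=
        measure_mono hsub
    _ ≤ ∑ T ∈ F, gnp n p {ω : Sym2 (Fin n) → Bool | ∀ e ∈ E, ω e = decide (e ∈ T)} :=
        measure_biUnion_finset_le _ _
    _ = ∑ T ∈ F, ENNReal.ofReal (p ^ T.card * (1 - p) ^ (E.card - T.card)) := by
        refine Finset.sum_congr rfl fun T hT => ?_
        rw [hF, Finset.mem_filter, Finset.mem_powerset] at hT
        rw [gnp_cylinder hp hp1 n E (fun e => decide (e ∈ T))]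
        have : ∀ e : Sym2 (Fin n),
            ENNReal.ofReal (if decide (e ∈ T) then p else 1 - p)
            = if e ∈ T then ENNReal.ofReal p else ENNReal.ofReal (1 - p) := by
          intro e
          by_cases h : e ∈ T <;> simp [h]
        rw [Finset.prod_congr rfl fun e _ => this e, Finset.prod_ite, Finset.prod_const,
          Finset.prod_const, Finset.filter_mem_eq_inter, Finset.inter_eq_right.2 hT.1,
          ← Finset.sdiff_eq_filter, Finset.card_sdiff_of_subset hT.1,
          ← ENNReal.ofReal_pow hp.le, ← ENNReal.ofReal_pow h1p, ← ENNReal.ofReal_mul (by positivity)]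
    _ = ENNReal.ofReal (∑ T ∈ F, p ^ T.card * (1 - p) ^ (E.card - T.card)) := by
        rw [ENNReal.ofReal_sum_of_nonneg]
        intro T _
        positivity
    _ ≤ ENNReal.ofReal (Real.exp (-(alphaQC γ p) * E.card)) :=
        ENNReal.ofReal_le_ofReal (qc_chernoff hp hpγ hγ E)
    _ = ENNReal.ofReal (Real.exp (-(alphaQC γ p) * (k.choose 2 : ℕ))) := by rw [hEcard]

lemma gnp_k_bound (hp : 0 < p) (hpγ : p < γ) (hγ : γ < 1) (n k : ℕ) :
    gnp n p {ω | ∃ A : Finset (Fin n), A.card = k ∧ γ * (k.choose 2 : ℝ) ≤ (edgesIn ω A : ℝ)}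
      ≤ (n.choose k : ℝ≥0∞) * ENNReal.ofReal (Real.exp (-(alphaQC γ p) * (k.choose 2 : ℕ))) := by
  have hsub : {ω : Sym2 (Fin n) → Bool |
        ∃ A : Finset (Fin n), A.card = k ∧ γ * (k.choose 2 : ℝ) ≤ (edgesIn ω A : ℝ)}
      ⊆ ⋃ A ∈ Finset.univ.powersetCard k,
          {ω : Sym2 (Fin n) → Bool | γ * (k.choose 2 : ℝ) ≤ (edgesIn ω A : ℝ)} := by
    rintro ω ⟨A, hA, h⟩
    exact Set.mem_biUnion (Finset.mem_powersetCard_univ.2 hA) h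
  calc gnp n p _ ≤ gnp n p (⋃ A ∈ Finset.univ.powersetCard k,
          {ω : Sym2 (Fin n) → Bool | γ * (k.choose 2 : ℝ) ≤ (edgesIn ω A : ℝ)}) :=
        measure_mono hsub
    _ ≤ ∑ A ∈ Finset.univ.powersetCard k,
          gnp n p {ω : Sym2 (Fin n) → Bool | γ * (k.choose 2 : ℝ) ≤ (edgesIn ω A : ℝ)} :=
        measure_biUnion_finset_le _ _
    _ ≤ ∑ A ∈ Finset.univ.powersetCard k,
          ENNReal.ofReal (Real.exp (-(alphaQC γ p) * (k.choose 2 : ℕ))) := by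
        refine Finset.sum_le_sum fun A hA => ?_
        exact gnp_A_bound hp hpγ hγ n A k (Finset.mem_powersetCard_univ.1 hA)
    _ = (n.choose k : ℝ≥0∞) * ENNReal.ofReal (Real.exp (-(alphaQC γ p) * (k.choose 2 : ℕ))) := by
        rw [Finset.sum_const, Finset.card_powersetCard, Finset.card_univ, Fintype.card_fin,
          nsmul_eq_mul]

lemma gnp_bad_bound (hp : 0 < p) (hpγ : p < γ) (hγ : γ < 1) (n : ℕ) (t : ℝ) :
    gnp n p {ω | t ≤ (omegaGamma γ ω : ℝ)}
      ≤ ENNReal.ofReal (∑ k ∈ Finset.Icc ⌈t⌉₊ n,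
          (n.choose k : ℝ) * Real.exp (-(alphaQC γ p) * (k.choose 2 : ℕ))) := by
  have hsub : {ω : Sym2 (Fin n) → Bool | t ≤ (omegaGamma γ ω : ℝ)}
      ⊆ ⋃ k ∈ Finset.Icc ⌈t⌉₊ n, {ω : Sym2 (Fin n) → Bool |
          ∃ A : Finset (Fin n), A.card = k ∧ γ * (k.choose 2 : ℝ) ≤ (edgesIn ω A : ℝ)} := by
    intro ω hω
    simp only [Set.mem_setOf_eq] at hω
    have hne : {k | ∃ A : Finset (Fin n), A.card = k
        ∧ γ * (k.choose 2 : ℝ) ≤ (edgesIn ω A : ℝ)}.Nonempty :=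
      ⟨0, ∅, Finset.card_empty, by norm_num⟩
    have hbdd : BddAbove {k | ∃ A : Finset (Fin n), A.card = k
        ∧ γ * (k.choose 2 : ℝ) ≤ (edgesIn ω A : ℝ)} := by
      refine ⟨n, ?_⟩
      rintro k ⟨A, hA, -⟩
      rw [← hA]
      calc A.card ≤ Finset.univ.card := Finset.card_le_univ A
        _ = n := by rw [Finset.card_univ, Fintype.card_fin]
    have hmem := Nat.sSup_mem hne hbdd
    obtain ⟨A, hA, hedge⟩ := hmem
    have hk : sSup {k | ∃ A : Finset (Fin n), A.card = k
        ∧ γ * (k.choose 2 : ℝ) ≤ (edgesIn ω A : ℝ)} ∈ Finset.Icc ⌈t⌉₊ n := by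
      rw [Finset.mem_Icc]
      constructor
      · exact Nat.ceil_le.2 hω
      · rw [← hA]
        calc A.card ≤ Finset.univ.card := Finset.card_le_univ A
          _ = n := by rw [Finset.card_univ, Fintype.card_fin]
    exact Set.mem_biUnion hk ⟨A, hA, hedge⟩
  calc gnp n p {ω | t ≤ (omegaGamma γ ω : ℝ)}
      ≤ gnp n p (⋃ k ∈ Finset.Icc ⌈t⌉₊ n, {ω : Sym2 (Fin n) → Bool |
          ∃ A : Finset (Fin n), A.card = k ∧ γ * (k.choose 2 : ℝ) ≤ (edgesIn ω A : ℝ)}) :=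
        measure_mono hsub
    _ ≤ ∑ k ∈ Finset.Icc ⌈t⌉₊ n, gnp n p {ω : Sym2 (Fin n) → Bool |
          ∃ A : Finset (Fin n), A.card = k ∧ γ * (k.choose 2 : ℝ) ≤ (edgesIn ω A : ℝ)} :=
        measure_biUnion_finset_le _ _
    _ ≤ ∑ k ∈ Finset.Icc ⌈t⌉₊ n,
          (n.choose k : ℝ≥0∞) * ENNReal.ofReal (Real.exp (-(alphaQC γ p) * (k.choose 2 : ℕ))) :=
        Finset.sum_le_sum fun k _ => gnp_k_bound hp hpγ hγ n k
    _ = ENNReal.ofReal (∑ k ∈ Finset.Icc ⌈t⌉₊ n,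
          (n.choose k : ℝ) * Real.exp (-(alphaQC γ p) * (k.choose 2 : ℕ))) := by
        rw [ENNReal.ofReal_sum_of_nonneg (fun k _ => by positivity)]
        refine Finset.sum_congr rfl fun k _ => ?_
        rw [ENNReal.ofReal_mul (by positivity), ENNReal.ofReal_natCast]

end QC

lemma qc_S_tendsto {p γ ε : ℝ} (hp : 0 < p) (hpγ : p < γ) (hγ : γ < 1) (hε : 0 < ε) :
    Tendsto (fun n : ℕ => ∑ k ∈ Finset.Icc
      ⌈(2 / alphaQC γ p) * (Real.log n - Real.log (Real.log n)
        + Real.log (Real.exp 1 * alphaQC γ p / 2)) + 1 + ε⌉₊ n,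
      (n.choose k : ℝ) * Real.exp (-(alphaQC γ p) * (k.choose 2 : ℕ)))
      atTop (nhds 0) := by
  set α := alphaQC γ p with hαd
  have hα : 0 < α := qc_alpha_pos hp hpγ hγ
  set c2 : ℝ := Real.log (Real.exp 1 * α / 2) with hc2d
  set δ : ℝ := α * ε / 4 with hδd
  have hδ : 0 < δ := by positivity
  set r : ℝ := Real.exp (-δ) with hrd
  have hr0 : 0 < r := Real.exp_pos _
  have hr1 : r < 1 := by
    rw [hrd]
    calc Real.exp (-δ) < Real.exp 0 := Real.exp_lt_exp.2 (by linarith)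
      _ = 1 := Real.exp_zero
  have h1r : (0:ℝ) < 1 - r := by linarith
  -- notation
  set T : ℕ → ℝ := fun n => (2 / α) * (Real.log n - Real.log (Real.log n) + c2) + 1 + ε
    with hTd
  set M : ℕ → ℝ := fun n => Real.log n - Real.log (Real.log n) + c2 with hMd
  -- basic limits
  have hL : Tendsto (fun n : ℕ => Real.log n) atTop atTop :=
    Real.tendsto_log_atTop.comp tendsto_natCast_atTop_atTop
  have hLL : Tendsto (fun n : ℕ => Real.log (Real.log n) / Real.log n) atTop (nhds 0) := by
    have h := Real.isLittleO_log_id_atTop.tendsto_div_nhds_zero.comp hL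
    simpa [Function.comp_def] using h
  have hM_atTop : Tendsto M atTop atTop := by
    apply tendsto_atTop_mono' atTop ?_
      (tendsto_atTop_add_const_right atTop c2 (hL.atTop_div_const two_pos))
    filter_upwards [hLL.eventually_lt_const (by norm_num : (0:ℝ) < 1/2),
      hL.eventually_gt_atTop 0] with n h1 h2
    have h3 : Real.log (Real.log n) < 1/2 * Real.log n := (div_lt_iff₀ h2).1 h1
    simp only [hMd]
    linarith
  have hT_atTop : Tendsto T atTop atTop := by
    have h1 : Tendsto (fun n : ℕ => (2 / α) * M n) atTop atTop :=
      hM_atTop.const_mul_atTop (by positivity)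
    have h2 := tendsto_atTop_add_const_right atTop (1 + ε) h1
    apply h2.congr
    intro n
    simp only [hTd, hMd]
    ring
  have hk0 : Tendsto (fun n : ℕ => ⌈T n⌉₊) atTop atTop := by
    rw [tendsto_atTop]
    intro b
    filter_upwards [hT_atTop.eventually_ge_atTop (b : ℝ)] with n hn
    have h2 : (b : ℝ) ≤ (⌈T n⌉₊ : ℝ) := hn.trans (Nat.le_ceil _)
    exact_mod_cast h2
  -- M/L and L/M limits
  have hMoverL : Tendsto (fun n : ℕ => M n / Real.log n) atTop (nhds 1) := by
    have h2 : Tendsto (fun n : ℕ =>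
        1 - Real.log (Real.log n) / Real.log n + c2 / Real.log n) atTop (nhds 1) := by
      have h3 := ((tendsto_const_nhds (x := (1:ℝ)) (f := atTop)).sub hLL).add
        ((tendsto_const_nhds (x := c2) (f := atTop)).div_atTop hL)
      simpa using h3
    apply h2.congr'
    filter_upwards [hL.eventually_gt_atTop 0] with n hn
    simp only [hMd]
    field_simp
  have hLoverM : Tendsto (fun n : ℕ => Real.log n / M n) atTop (nhds 1) := by
    have h := hMoverL.inv₀ one_ne_zero
    simpa [inv_div] using h
  have hlogdiff : Tendsto (fun n : ℕ => Real.log (Real.log n) - Real.log (M n))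
      atTop (nhds 0) := by
    have h := (Real.continuousAt_log one_ne_zero).tendsto.comp hLoverM
    have h2 : Tendsto (fun n : ℕ => Real.log (Real.log n / M n)) atTop (nhds 0) := by
      simpa [Function.comp_def, Real.log_one] using h
    apply h2.congr'
    filter_upwards [hL.eventually_gt_atTop 0, hM_atTop.eventually_gt_atTop 0] with n h1 h2
    rw [Real.log_div (ne_of_gt h1) (ne_of_gt h2)]
  -- the constant identity
  have hc2sum : c2 + Real.log (2 / α) = 1 := by
    rw [hc2d, Real.log_div (by positivity) (two_ne_zero),
      Real.log_mul (Real.exp_ne_zero 1) (ne_of_gt hα), Real.log_exp,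
      Real.log_div (two_ne_zero) (ne_of_gt hα)]
    ring
  -- per-term bound
  have hterm : ∀ᶠ n : ℕ in atTop, ∀ k ∈ Finset.Icc ⌈T n⌉₊ n,
      (n.choose k : ℝ) * Real.exp (-α * (k.choose 2 : ℕ)) ≤ r ^ k := by
    filter_upwards [hM_atTop.eventually_ge_atTop 1, hlogdiff.eventually_lt_const hδ,
      hL.eventually_ge_atTop 1] with n hM1 hld hL1
    intro k hk
    rw [Finset.mem_Icc] at hk
    have hMpos : (0:ℝ) < M n := by linarith
    have hTn : T n = (2 / α) * M n + 1 + ε := by simp only [hTd, hMd]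
    have hMn0 : (0:ℝ) ≤ (2 / α) * M n := mul_nonneg (by positivity) hMpos.le
    have hTpos : (0:ℝ) < T n := by rw [hTn]; linarith
    have hceil1 : 1 ≤ ⌈T n⌉₊ := Nat.ceil_pos.2 hTpos
    have hk1 : 1 ≤ k := hceil1.trans hk.1
    have hkR : T n ≤ (k : ℝ) := Nat.ceil_le.1 hk.1
    have hk0R : (0:ℝ) < (k : ℝ) := by exact_mod_cast hk1
    have hn1 : 1 ≤ n := hk1.trans hk.2
    have hnR : (1:ℝ) ≤ (n : ℝ) := by exact_mod_cast hn1
    have hnpos : (0:ℝ) < (n : ℝ) := by linarith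
    -- choose bound
    have hf0 : (0:ℝ) < (k.factorial : ℝ) := by exact_mod_cast k.factorial_pos
    have hchoose : (n.choose k : ℝ) ≤ (Real.exp 1 * n / k) ^ k := by
      have h1 : (n.choose k : ℝ) ≤ (n:ℝ) ^ k / (k.factorial : ℝ) := Nat.choose_le_pow_div k n
      have h3 := Real.pow_div_factorial_le_exp (x := (k:ℝ)) hk0R.le k
      rw [div_le_iff₀ hf0] at h3
      have h2 : ((k:ℝ)) ^ k ≤ Real.exp 1 ^ k * (k.factorial : ℝ) := by
        calc ((k:ℝ)) ^ k ≤ Real.exp (k:ℝ) * (k.factorial : ℝ) := h3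
          _ = Real.exp 1 ^ k * (k.factorial : ℝ) := by
              rw [← Real.exp_nat_mul, mul_one]
      have h4 : (n:ℝ) ^ k / (k.factorial : ℝ) ≤ (Real.exp 1 * n / k) ^ k := by
        rw [div_pow, mul_pow, div_le_div_iff₀ hf0 (by positivity)]
        calc (n:ℝ) ^ k * (k:ℝ) ^ k
            ≤ (n:ℝ) ^ k * (Real.exp 1 ^ k * (k.factorial : ℝ)) :=
              mul_le_mul_of_nonneg_left h2 (by positivity)
          _ = Real.exp 1 ^ k * (n:ℝ) ^ k * (k.factorial : ℝ) := by ring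
      exact h1.trans h4
    -- the exponent inequality
    have hgk : 1 + Real.log n - Real.log k - α * ((k:ℝ) - 1) / 2 ≤ -δ := by
      have hkR' : (2 / α) * M n + 1 + ε ≤ (k:ℝ) := by rw [← hTn]; exact hkR
      have hlogk : Real.log (2 / α) + Real.log (M n) ≤ Real.log (k : ℝ) := by
        rw [← Real.log_mul (by positivity) (ne_of_gt hMpos)]
        apply Real.log_le_log (by positivity)
        linarith
      have hc' : α * ((2 / α) * M n + ε) / 2 = M n + α * ε / 2 := by
        field_simp
      have hk1' : (2 / α) * M n + ε ≤ (k:ℝ) - 1 := by linarith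
      have hc : M n + α * ε / 2 ≤ α * ((k:ℝ) - 1) / 2 := by
        rw [← hc']
        gcongr
      have hMn : M n = Real.log n - Real.log (Real.log n) + c2 := by simp only [hMd]
      have hδval : α * ε / 2 = 2 * δ := by rw [hδd]; ring
      linarith [hld, hc2sum, hlogk, hc, hMn.ge, hMn.le, hδval]
    -- put it together
    have hform : (Real.exp 1 * n / k : ℝ) ^ k * Real.exp (-α * (k.choose 2 : ℕ))
        ≤ r ^ k := by
      have hrpos : (0:ℝ) < Real.exp 1 * n / k := by positivity
      rw [← Real.exp_log hrpos, ← Real.exp_nat_mul, hrd, ← Real.exp_nat_mul, ← Real.exp_add,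
        Real.exp_le_exp]
      have hlogv : Real.log (Real.exp 1 * n / k) = 1 + Real.log n - Real.log k := by
        rw [Real.log_div (by positivity) (ne_of_gt hk0R),
          Real.log_mul (Real.exp_ne_zero 1) (ne_of_gt hnpos), Real.log_exp]
      rw [hlogv, Nat.cast_choose_two]
      have hident : (k:ℝ) * (1 + Real.log n - Real.log k)
            + -α * ((k:ℝ) * ((k:ℝ) - 1) / 2)
          = (k:ℝ) * (1 + Real.log n - Real.log k - α * ((k:ℝ) - 1) / 2) := by ring
      rw [hident]
      calc (k:ℝ) * (1 + Real.log n - Real.log k - α * ((k:ℝ) - 1) / 2)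
          ≤ (k:ℝ) * (-δ) := mul_le_mul_of_nonneg_left hgk hk0R.le
        _ = (k:ℝ) * -δ := by ring
    calc (n.choose k : ℝ) * Real.exp (-α * (k.choose 2 : ℕ))
        ≤ (Real.exp 1 * n / k) ^ k * Real.exp (-α * (k.choose 2 : ℕ)) :=
          mul_le_mul_of_nonneg_right hchoose (Real.exp_nonneg _)
      _ ≤ r ^ k := hform
  -- sum bound
  have hub : ∀ᶠ n : ℕ in atTop,
      ∑ k ∈ Finset.Icc ⌈T n⌉₊ n, (n.choose k : ℝ) * Real.exp (-α * (k.choose 2 : ℕ))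
        ≤ r ^ ⌈T n⌉₊ * (1 - r)⁻¹ := by
    filter_upwards [hterm] with n hn
    calc ∑ k ∈ Finset.Icc ⌈T n⌉₊ n, (n.choose k : ℝ) * Real.exp (-α * (k.choose 2 : ℕ))
        ≤ ∑ k ∈ Finset.Icc ⌈T n⌉₊ n, r ^ k := Finset.sum_le_sum hn
      _ = ∑ k ∈ Finset.Ico ⌈T n⌉₊ (n + 1), r ^ k := by rw [Finset.Ico_add_one_right_eq_Icc]
      _ = ∑ i ∈ Finset.range (n + 1 - ⌈T n⌉₊), r ^ (⌈T n⌉₊ + i) :=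
          Finset.sum_Ico_eq_sum_range _ _ _
      _ = r ^ ⌈T n⌉₊ * ∑ i ∈ Finset.range (n + 1 - ⌈T n⌉₊), r ^ i := by
          rw [Finset.mul_sum]
          exact Finset.sum_congr rfl fun i _ => (pow_add r _ i)
      _ ≤ r ^ ⌈T n⌉₊ * (1 - r)⁻¹ := by
          apply mul_le_mul_of_nonneg_left ?_ (by positivity)
          calc ∑ i ∈ Finset.range (n + 1 - ⌈T n⌉₊), r ^ i
              ≤ ∑' i : ℕ, r ^ i :=
                Summable.sum_le_tsum _ (fun i _ => by positivity)
                  (summable_geometric_of_lt_one hr0.le hr1)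
            _ = (1 - r)⁻¹ := tsum_geometric_of_lt_one hr0.le hr1
  -- conclude
  have hubt : Tendsto (fun n : ℕ => r ^ ⌈T n⌉₊ * (1 - r)⁻¹) atTop (nhds 0) := by
    have h := (tendsto_pow_atTop_nhds_zero_of_lt_one hr0.le hr1).comp hk0
    have h2 := h.mul_const (1 - r)⁻¹
    simpa [Function.comp] using h2
  have hlo : ∀ᶠ n : ℕ in atTop,
      (0:ℝ) ≤ ∑ k ∈ Finset.Icc ⌈T n⌉₊ n,
        (n.choose k : ℝ) * Real.exp (-α * (k.choose 2 : ℕ)) := by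
    filter_upwards with n
    apply Finset.sum_nonneg
    intro k _
    positivity
  have hfinal := tendsto_of_tendsto_of_tendsto_of_le_of_le' tendsto_const_nhds hubt hlo hub
  apply hfinal.congr
  intro n
  rfl

/-- Upper bound (Lemma 2 of the paper): with high probability
`ω_γ(G_{n,p}) < (2/α(γ,p))(log n − log log n + log(e α(γ,p)/2)) + 1 + ε`. -/
theorem omegaGamma_upper_bound
    (p γ ε : ℝ) (hp : 0 < p) (hpγ : p < γ) (hγ : γ < 1) (hε : 0 < ε) :
    Tendsto
      (fun n : ℕ => gnp n p
        {ω | (omegaGamma γ ω : ℝ) <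
          (2 / alphaQC γ p) *
            (Real.log n - Real.log (Real.log n) + Real.log (Real.exp 1 * alphaQC γ p / 2))
          + 1 + ε})
      atTop (nhds 1) := by
  set T : ℕ → ℝ := fun n => (2 / alphaQC γ p) *
      (Real.log n - Real.log (Real.log n) + Real.log (Real.exp 1 * alphaQC γ p / 2))
      + 1 + ε with hTd
  have hbad : ∀ n : ℕ, gnp n p {ω | T n ≤ (omegaGamma γ ω : ℝ)}
      ≤ ENNReal.ofReal (∑ k ∈ Finset.Icc ⌈T n⌉₊ n,
          (n.choose k : ℝ) * Real.exp (-(alphaQC γ p) * (k.choose 2 : ℕ))) :=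
    fun n => gnp_bad_bound hp hpγ hγ n (T n)
  have hS : Tendsto (fun n : ℕ => ∑ k ∈ Finset.Icc ⌈T n⌉₊ n,
      (n.choose k : ℝ) * Real.exp (-(alphaQC γ p) * (k.choose 2 : ℕ))) atTop (nhds 0) :=
    qc_S_tendsto hp hpγ hγ hε
  have hbadto : Tendsto (fun n : ℕ => gnp n p {ω | T n ≤ (omegaGamma γ ω : ℝ)})
      atTop (nhds 0) := by
    have hofReal : Tendsto (fun n : ℕ => ENNReal.ofReal (∑ k ∈ Finset.Icc ⌈T n⌉₊ n,
        (n.choose k : ℝ) * Real.exp (-(alphaQC γ p) * (k.choose 2 : ℕ)))) atTop (nhds 0) := by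
      have h := ENNReal.tendsto_ofReal hS
      simpa using h
    exact tendsto_of_tendsto_of_tendsto_of_le_of_le tendsto_const_nhds hofReal
      (fun n => zero_le) hbad
  have hkey : ∀ n : ℕ, 1 - gnp n p {ω | T n ≤ (omegaGamma γ ω : ℝ)}
      ≤ gnp n p {ω | (omegaGamma γ ω : ℝ) < T n} := by
    intro n
    rw [tsub_le_iff_right]
    have huniv : (Set.univ : Set (Sym2 (Fin n) → Bool))
        ⊆ {ω | (omegaGamma γ ω : ℝ) < T n} ∪ {ω | T n ≤ (omegaGamma γ ω : ℝ)} := by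
      intro ω _
      rcases lt_or_ge ((omegaGamma γ ω : ℝ)) (T n) with h | h
      · exact Or.inl h
      · exact Or.inr h
    calc (1 : ℝ≥0∞) = gnp n p Set.univ := measure_univ.symm
      _ ≤ gnp n p ({ω | (omegaGamma γ ω : ℝ) < T n} ∪ {ω | T n ≤ (omegaGamma γ ω : ℝ)}) :=
          measure_mono huniv
      _ ≤ gnp n p {ω | (omegaGamma γ ω : ℝ) < T n}
          + gnp n p {ω | T n ≤ (omegaGamma γ ω : ℝ)} := measure_union_le _ _
  have hlo : Tendsto (fun n : ℕ => 1 - gnp n p {ω | T n ≤ (omegaGamma γ ω : ℝ)})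
      atTop (nhds 1) := by
    have h := ENNReal.Tendsto.sub (tendsto_const_nhds (x := (1:ℝ≥0∞)) (f := atTop)) hbadto
      (Or.inl (by simp))
    simpa using h
  refine tendsto_of_tendsto_of_tendsto_of_le_of_le hlo tendsto_const_nhds hkey
    (fun n => prob_le_one)
end

section
/- Let γ ∈ (0,1) be fixed. There exists k₀ such that for all k ≥ k₀, every ℓ ∈ {2,…,k−1}, and every fixed vertex subset A of size ℓ of the Erdős–Rényi random graph G(k, ⌈γ·binom(k,2)⌉), one has binom(k,ℓ) · P( e(A) ≥ γ·binom(ℓ,2) + D_k(ℓ) ) ≤ k^{−2}. -/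
/-- The potential edge slots of a graph on vertex set `Fin k`: unordered pairs of
distinct vertices. -/
def edgeSlots (k : ℕ) : Finset (Sym2 (Fin k)) :=
  Finset.univ.filter fun e => ¬ e.IsDiag

/-- All graphs on `Fin k` with exactly `m` edges, encoded as their edge sets. -/
def graphsWithEdges (k m : ℕ) : Finset (Finset (Sym2 (Fin k))) :=
  (edgeSlots k).powersetCard m

open scoped Classical in
/-- The probability of `event` under the Erdős–Rényi random graph `G(k,m)`, the uniform
distribution on all graphs on `Fin k` with exactly `m` edges. -/
noncomputable def erProb (k m : ℕ) (event : Finset (Sym2 (Fin k)) → Prop) : ℝ :=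
  (((graphsWithEdges k m).filter fun s => event s).card : ℝ) /
    ((graphsWithEdges k m).card : ℝ)

/-- `e(A)`: the number of edges of the graph with edge set `s` having both endpoints in `A`. -/
def edgesOf {k : ℕ} (s : Finset (Sym2 (Fin k))) (A : Finset (Fin k)) : ℕ :=
  (s.filter fun e => e ∈ A.sym2).card

/-- `D_k(ℓ) = min(T, S−T) · ℓ^{−1/2} · log k`, where `S = C(k,2)` and `T = C(ℓ,2)`. -/
noncomputable def Dflat (k ℓ : ℕ) : ℝ :=
  (min (ℓ.choose 2) (k.choose 2 - ℓ.choose 2) : ℕ) / Real.sqrt ℓ * Real.log k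

/-- A graph on `Fin k` with edge set `s` is `γ`-flat if it has exactly `⌈γ·C(k,2)⌉` edges and
every vertex subset `A` with `|A| = ℓ ∈ {2,…,k−1}` satisfies `e(A) ≤ γ·C(ℓ,2) + D_k(ℓ)`. -/
def IsFlatSet (γ : ℝ) (k : ℕ) (s : Finset (Sym2 (Fin k))) : Prop :=
  s.card = ⌈γ * (k.choose 2 : ℝ)⌉₊ ∧
  ∀ A : Finset (Fin k), 2 ≤ A.card → A.card + 1 ≤ k →
    (edgesOf s A : ℝ) ≤ γ * (A.card.choose 2 : ℝ) + Dflat k A.card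


section AuxER
open Finset

/-- Number of `m`-subsets of `U` containing a fixed `j`-subset `F`. -/
lemma count_supersets {α : Type*} [DecidableEq α] (U F : Finset α) (m : ℕ)
    (hFU : F ⊆ U) (hjm : F.card ≤ m) :
    ((U.powersetCard m).filter (fun s => F ⊆ s)).card
      = (U.card - F.card).choose (m - F.card) := by
  rw [← Finset.card_sdiff_of_subset hFU, ← Finset.card_powersetCard (m - F.card) (U \ F)]
  apply Finset.card_bij' (fun s _ => s \ F) (fun t _ => t ∪ F)
  · intro s hs
    simp only [mem_filter, Finset.mem_powersetCard] at hs
    obtain ⟨⟨hsU, hsc⟩, hFs⟩ := hs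
    rw [Finset.mem_powersetCard]
    exact ⟨Finset.sdiff_subset_sdiff hsU (le_refl F), by rw [Finset.card_sdiff_of_subset hFs, hsc]⟩
  · intro t ht
    rw [Finset.mem_powersetCard] at ht
    obtain ⟨htUF, htc⟩ := ht
    have hdis : Disjoint t F := by
      intro x hxt hxF y hy
      have := htUF (hxt hy)
      rw [Finset.mem_sdiff] at this
      exact absurd (hxF hy) this.2
    simp only [mem_filter, Finset.mem_powersetCard]
    refine ⟨⟨Finset.union_subset (htUF.trans Finset.sdiff_subset) hFU, ?_⟩,
      Finset.subset_union_right⟩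
    rw [Finset.card_union_of_disjoint hdis, htc]
    omega
  · intro s hs
    simp only [mem_filter] at hs
    exact Finset.sdiff_union_of_subset hs.2
  · intro t ht
    rw [Finset.mem_powersetCard] at ht
    have hdis : Disjoint t F := by
      intro x hxt hxF y hy
      have := ht.1 (hxt hy)
      rw [Finset.mem_sdiff] at this
      exact absurd (hxF hy) this.2
    exact Finset.union_sdiff_cancel_right hdis

/-- Factorial moment bound: tail count of `|s ∩ Tset|` times `C(a,j)`. -/
lemma moment_bound {α : Type*} [DecidableEq α] (U Tset : Finset α) (hTU : Tset ⊆ U)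
    (m a j : ℕ) (hjm : j ≤ m) :
    ((U.powersetCard m).filter (fun s => a ≤ (s ∩ Tset).card)).card * a.choose j
      ≤ Tset.card.choose j * (U.card - j).choose (m - j) := by
  have key : ∀ s : Finset α, (s ∩ Tset).card.choose j
      = ((Tset.powersetCard j).filter (fun F => F ⊆ s)).card := by
    intro s
    rw [← Finset.card_powersetCard]
    congr 1
    ext F
    simp only [Finset.mem_powersetCard, mem_filter, Finset.subset_inter_iff]
    tauto
  calc ((U.powersetCard m).filter (fun s => a ≤ (s ∩ Tset).card)).card * a.choose j
      = ∑ s ∈ (U.powersetCard m).filter (fun s => a ≤ (s ∩ Tset).card), a.choose j := by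
        rw [Finset.sum_const, smul_eq_mul]
    _ ≤ ∑ s ∈ (U.powersetCard m).filter (fun s => a ≤ (s ∩ Tset).card),
          (s ∩ Tset).card.choose j := by
        apply Finset.sum_le_sum
        intro s hs
        exact Nat.choose_le_choose j (mem_filter.1 hs).2
    _ ≤ ∑ s ∈ U.powersetCard m, (s ∩ Tset).card.choose j :=
        Finset.sum_le_sum_of_subset (Finset.filter_subset _ _)
    _ = ∑ s ∈ U.powersetCard m, ∑ F ∈ Tset.powersetCard j, (if F ⊆ s then 1 else 0) := by
        refine Finset.sum_congr rfl fun s _ => ?_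
        rw [key s, Finset.card_filter]
    _ = ∑ F ∈ Tset.powersetCard j, ∑ s ∈ U.powersetCard m, (if F ⊆ s then 1 else 0) :=
        Finset.sum_comm
    _ = ∑ F ∈ Tset.powersetCard j, (U.card - j).choose (m - j) := by
        refine Finset.sum_congr rfl fun F hF => ?_
        rw [Finset.mem_powersetCard] at hF
        rw [← Finset.card_filter, ← hF.2]
        exact count_supersets U F m (hF.1.trans hTU) (hF.2 ▸ hjm)
    _ = Tset.card.choose j * (U.card - j).choose (m - j) := by
        rw [Finset.sum_const, smul_eq_mul, Finset.card_powersetCard]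

lemma choose_descFactorial (j m n : ℕ) (hjm : j ≤ m) (hmn : m ≤ n) :
    n.choose m * m.descFactorial j = (n - j).choose (m - j) * n.descFactorial j := by
  induction j with
  | zero => simp
  | succ i ih =>
    have hi : i ≤ m := Nat.le_of_succ_le hjm
    have him : i < m := hjm
    have hin : i < n := lt_of_lt_of_le him hmn
    rw [Nat.descFactorial_succ, Nat.descFactorial_succ]
    have habs : (m - i) * ((n - i).choose (m - i)) = (n - i) * ((n - i - 1).choose (m - i - 1)) := by
      have h1 : n - i = (n - i - 1) + 1 := by omega
      have h2 : m - i = (m - i - 1) + 1 := by omega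
      have h3 := Nat.add_one_mul_choose_eq (n - i - 1) (m - i - 1)
      rw [h1, h2]
      simp only [Nat.add_sub_cancel]
      rw [h3]
      ring
    calc n.choose m * ((m - i) * m.descFactorial i)
        = (m - i) * (n.choose m * m.descFactorial i) := by ring
      _ = (m - i) * ((n - i).choose (m - i) * n.descFactorial i) := by rw [ih hi]
      _ = ((m - i) * ((n - i).choose (m - i))) * n.descFactorial i := by ring
      _ = ((n - i) * ((n - i - 1).choose (m - i - 1))) * n.descFactorial i := by rw [habs]
      _ = (n - (i + 1)).choose (m - (i + 1)) * ((n - i) * n.descFactorial i) := by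
          have : n - (i+1) = n - i - 1 := by omega
          have h2 : m - (i+1) = m - i - 1 := by omega
          rw [this, h2]; ring

lemma descFactorial_ratio (m n : ℕ) (hmn : m ≤ n) :
    ∀ j, m.descFactorial j * n ^ j ≤ m ^ j * n.descFactorial j := by
  intro j
  induction j with
  | zero => simp
  | succ i ih =>
    rw [Nat.descFactorial_succ, Nat.descFactorial_succ, pow_succ, pow_succ]
    have h1 : (m - i) * n ≤ m * (n - i) := by
      have e1 : (m - i) * n = m * n - i * n := by rw [Nat.sub_mul]
      have e2 : m * (n - i) = m * n - m * i := by rw [Nat.mul_sub]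
      rw [e1, e2]
      apply Nat.sub_le_sub_left
      calc m * i = i * m := by ring
        _ ≤ i * n := Nat.mul_le_mul_left i hmn
    calc (m - i) * m.descFactorial i * (n ^ i * n)
        = ((m - i) * n) * (m.descFactorial i * n ^ i) := by ring
      _ ≤ (m * (n - i)) * (m ^ i * n.descFactorial i) := Nat.mul_le_mul h1 ih
      _ = m ^ i * m * ((n - i) * n.descFactorial i) := by ring

lemma pow_le_descFactorial (a : ℕ) : ∀ j, (a + 1 - j) ^ j ≤ a.descFactorial j := by
  intro j
  induction j with
  | zero => simp
  | succ i ih =>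
    rw [Nat.descFactorial_succ]
    have h1 : a + 1 - (i + 1) = a - i := by omega
    rw [h1, pow_succ]
    calc (a - i) ^ i * (a - i) = (a - i) * (a - i) ^ i := by ring
      _ ≤ (a - i) * (a + 1 - i) ^ i :=
          Nat.mul_le_mul_left _ (Nat.pow_le_pow_left (by omega) i)
      _ ≤ (a - i) * a.descFactorial i := Nat.mul_le_mul_left _ ih

/-- Master counting inequality (★). -/
lemma master {α : Type*} [DecidableEq α] (U Tset : Finset α) (hTU : Tset ⊆ U)
    (m a j : ℕ) (hjm : j ≤ m) (hmU : m ≤ U.card) :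
    ((U.powersetCard m).filter (fun s => a ≤ (s ∩ Tset).card)).card
        * ((a + 1 - j) ^ j * U.card ^ j)
      ≤ Tset.card ^ j * m ^ j * U.card.choose m := by
  set N := ((U.powersetCard m).filter (fun s => a ≤ (s ∩ Tset).card)).card with hN
  set S := U.card
  set T := Tset.card
  have hjS : j ≤ S := hjm.trans hmU
  have hdfS : 0 < S.descFactorial j := by
    have := @Nat.descFactorial_eq_zero_iff_lt S j
    omega
  have h1 := moment_bound U Tset hTU m a j hjm
  have h2 := choose_descFactorial j m S hjm hmU
  -- (iii): N * dF(a,j) * dF(S,j) ≤ dF(T,j) * (C(S,m) * dF(m,j))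
  have h4 : N * a.descFactorial j * S.descFactorial j
      ≤ T.descFactorial j * (S.choose m * m.descFactorial j) := by
    calc N * a.descFactorial j * S.descFactorial j
        = (N * a.choose j) * S.descFactorial j * j.factorial := by
          rw [Nat.descFactorial_eq_factorial_mul_choose]; ring
      _ ≤ (T.choose j * (S - j).choose (m - j)) * S.descFactorial j * j.factorial := by
          apply Nat.mul_le_mul_right
          exact Nat.mul_le_mul_right _ h1
      _ = (T.choose j * j.factorial) * ((S - j).choose (m - j) * S.descFactorial j) := by ring
      _ = T.descFactorial j * (S.choose m * m.descFactorial j) := by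
          rw [← h2, Nat.descFactorial_eq_factorial_mul_choose m j,
            Nat.descFactorial_eq_factorial_mul_choose T j]; ring
  have h5 : N * ((a + 1 - j) ^ j * S ^ j) * S.descFactorial j
      ≤ (T ^ j * m ^ j * S.choose m) * S.descFactorial j := by
    calc N * ((a + 1 - j) ^ j * S ^ j) * S.descFactorial j
        = N * (a + 1 - j) ^ j * S.descFactorial j * S ^ j := by ring
      _ ≤ N * a.descFactorial j * S.descFactorial j * S ^ j := by
          apply Nat.mul_le_mul_right
          apply Nat.mul_le_mul_right
          exact Nat.mul_le_mul_left N (pow_le_descFactorial a j)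
      _ ≤ T.descFactorial j * (S.choose m * m.descFactorial j) * S ^ j :=
          Nat.mul_le_mul_right _ h4
      _ = T.descFactorial j * S.choose m * (m.descFactorial j * S ^ j) := by ring
      _ ≤ T.descFactorial j * S.choose m * (m ^ j * S.descFactorial j) :=
          Nat.mul_le_mul_left _ (descFactorial_ratio m S hmU j)
      _ ≤ T ^ j * S.choose m * (m ^ j * S.descFactorial j) := by
          apply Nat.mul_le_mul_right
          exact Nat.mul_le_mul_right _ (Nat.descFactorial_le_pow T j)
      _ = (T ^ j * m ^ j * S.choose m) * S.descFactorial j := by ring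
  exact Nat.le_of_mul_le_mul_right h5 hdfS


section Test
variable {α : Type*} [DecidableEq α]

/-- Complementation: tail for `Tset` inside `m`-sets equals tail for `U \ Tset`
inside `(|U|-m)`-sets. -/
lemma compl_count (U Tset : Finset α) (hTU : Tset ⊆ U) (m a b : ℕ)
    (hmU : m ≤ U.card) (hb : b + m = (U \ Tset).card + a) :
    ((U.powersetCard m).filter (fun s => a ≤ (s ∩ Tset).card)).card
      = ((U.powersetCard (U.card - m)).filter
          (fun s => b ≤ (s ∩ (U \ Tset)).card)).card := by
  have count3 : ∀ s : Finset α, s ⊆ U →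
      (s ∩ Tset).card + (s ∩ (U \ Tset)).card = s.card ∧
      ((U \ s) ∩ Tset).card + (s ∩ Tset).card = Tset.card ∧
      ((U \ s) ∩ (U \ Tset)).card + (s ∩ (U \ Tset)).card = (U \ Tset).card := by
    intro s hsU
    refine ⟨?_, ?_, ?_⟩
    · rw [← Finset.card_union_of_disjoint]
      · congr 1
        rw [← Finset.inter_union_distrib_left, Finset.union_sdiff_of_subset hTU,
          Finset.inter_eq_left.2 hsU]
      · exact Finset.disjoint_of_subset_left Finset.inter_subset_right
          (Finset.disjoint_of_subset_right Finset.inter_subset_right Finset.disjoint_sdiff)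
    · rw [← Finset.card_union_of_disjoint]
      · congr 1
        rw [← Finset.union_inter_distrib_right, Finset.sdiff_union_of_subset hsU,
          Finset.inter_eq_right.2 hTU]
      · exact Finset.disjoint_of_subset_left Finset.inter_subset_left
          (Finset.disjoint_of_subset_right Finset.inter_subset_left Finset.sdiff_disjoint)
    · rw [← Finset.card_union_of_disjoint]
      · congr 1
        rw [← Finset.union_inter_distrib_right, Finset.sdiff_union_of_subset hsU,
          Finset.inter_eq_right.2 Finset.sdiff_subset]
      · exact Finset.disjoint_of_subset_left Finset.inter_subset_left
          (Finset.disjoint_of_subset_right Finset.inter_subset_left Finset.sdiff_disjoint)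
  have hWT : (U \ Tset).card + Tset.card = U.card := by
    rw [Finset.card_sdiff_of_subset hTU]
    have := Finset.card_le_card hTU
    omega
  apply Finset.card_bij' (fun s _ => U \ s) (fun t _ => U \ t)
  · intro s hs
    simp only [mem_filter, Finset.mem_powersetCard] at hs ⊢
    obtain ⟨⟨hsU, hsc⟩, ha⟩ := hs
    obtain ⟨c1, c2, c3⟩ := count3 s hsU
    refine ⟨⟨Finset.sdiff_subset, by rw [Finset.card_sdiff_of_subset hsU, hsc]⟩, ?_⟩
    omega
  · intro t ht
    simp only [mem_filter, Finset.mem_powersetCard] at ht ⊢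
    obtain ⟨⟨htU, htc⟩, hbt⟩ := ht
    obtain ⟨c1, c2, c3⟩ := count3 t htU
    have hcard : (U \ t).card = m := by
      rw [Finset.card_sdiff_of_subset htU, htc]; omega
    refine ⟨⟨Finset.sdiff_subset, hcard⟩, ?_⟩
    omega
  · intro s hs
    simp only [mem_filter, Finset.mem_powersetCard] at hs
    exact Finset.sdiff_sdiff_eq_self hs.1.1
  · intro t ht
    simp only [mem_filter, Finset.mem_powersetCard] at ht
    exact Finset.sdiff_sdiff_eq_self ht.1.1

end Test


lemma log_le_sqrt_half {k : ℕ} (hk : 1024 ≤ k) : Real.log k ≤ Real.sqrt ((k : ℝ) / 2) := by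
  have hk1 : (1024 : ℝ) ≤ (k : ℝ) := by exact_mod_cast hk
  have hk0 : (0 : ℝ) ≤ (k : ℝ) := by linarith
  set y := Real.sqrt (Real.sqrt (k : ℝ)) with hy
  have hy0 : 0 < y := Real.sqrt_pos.2 (Real.sqrt_pos.2 (by linarith))
  have hlog : Real.log k = 4 * Real.log y := by
    rw [hy, Real.log_sqrt (Real.sqrt_nonneg _), Real.log_sqrt hk0]; ring
  have h1 : Real.log k ≤ 4 * y := by
    rw [hlog]
    have := Real.log_le_sub_one_of_pos hy0
    nlinarith
  have hsq : y ^ 2 = Real.sqrt (k : ℝ) := Real.sq_sqrt (Real.sqrt_nonneg _)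
  have h32 : (32 : ℝ) ≤ Real.sqrt (k : ℝ) := by
    rw [show (32 : ℝ) = Real.sqrt 1024 by
      rw [show (1024 : ℝ) = 32 ^ 2 by norm_num, Real.sqrt_sq (by norm_num)]]
    exact Real.sqrt_le_sqrt hk1
  have hsqk : Real.sqrt (k : ℝ) * Real.sqrt (k : ℝ) = (k : ℝ) := Real.mul_self_sqrt hk0
  have h2 : 4 * y ≤ Real.sqrt ((k : ℝ) / 2) := by
    rw [show (4 : ℝ) * y = Real.sqrt ((4 * y) ^ 2) by
      rw [Real.sqrt_sq (by positivity)]]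
    apply Real.sqrt_le_sqrt
    have : (4 * y) ^ 2 = 16 * Real.sqrt (k : ℝ) := by rw [mul_pow, hsq]; norm_num
    rw [this]
    nlinarith
  linarith

lemma final_step (k E j : ℕ) (hk : 1 ≤ k) (r Q P : ℝ) (hQ : Q ≤ (k : ℝ) ^ E)
    (hQ0 : 0 ≤ Q) (hP0 : 0 ≤ P) (hr0 : 0 < r) (hP : P ≤ r ^ j)
    (hkey : ((E : ℝ) + 2) * Real.log k ≤ j * (1 - r)) : Q * P ≤ ((k : ℝ) ^ 2)⁻¹ := by
  have hk0 : (0 : ℝ) < k := by exact_mod_cast hk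
  have hrj : r ^ j ≤ Real.exp (-(((E : ℝ) + 2) * Real.log k)) := by
    have h1 : Real.log (r ^ j) = j * Real.log r := by
      rw [Real.log_pow]
    have h2 : Real.log r ≤ r - 1 := Real.log_le_sub_one_of_pos hr0
    have h3 : (j : ℝ) * Real.log r ≤ -((j : ℝ) * (1 - r)) := by
      have hj0 : (0 : ℝ) ≤ j := Nat.cast_nonneg j
      nlinarith
    calc r ^ j = Real.exp (Real.log (r ^ j)) := (Real.exp_log (by positivity)).symm
      _ ≤ Real.exp (-(((E : ℝ) + 2) * Real.log k)) := by
          apply Real.exp_le_exp.2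
          rw [h1]
          linarith
  have hexp : Real.exp (-(((E : ℝ) + 2) * Real.log k)) = ((k : ℝ) ^ (E + 2))⁻¹ := by
    rw [Real.exp_neg]
    congr 1
    rw [show ((E : ℝ) + 2) * Real.log k = Real.log k * ((E + 2 : ℕ) : ℝ) by push_cast; ring,
      Real.exp_mul, Real.exp_log hk0, Real.rpow_natCast]
  have hState : Q * P ≤ (k : ℝ) ^ E * ((k : ℝ) ^ (E + 2))⁻¹ := by
    calc Q * P ≤ (k : ℝ) ^ E * P := by
          apply mul_le_mul_of_nonneg_right hQ hP0
      _ ≤ (k : ℝ) ^ E * ((k : ℝ) ^ (E + 2))⁻¹ := by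
          apply mul_le_mul_of_nonneg_left _ (by positivity)
          rw [← hexp]; exact hP.trans hrj
  calc Q * P ≤ (k : ℝ) ^ E * ((k : ℝ) ^ (E + 2))⁻¹ := hState
    _ = ((k : ℝ) ^ 2)⁻¹ := by
        rw [pow_add]
        field_simp



lemma slots_filter_eq {k : ℕ} (A : Finset (Fin k)) :
    (edgeSlots k).filter (fun e => e ∈ A.sym2) = A.offDiag.image Sym2.mk.uncurry := by
  ext e
  induction e using Sym2.inductionOn with
  | hf x y =>
    simp only [edgeSlots, mem_filter, Finset.mem_univ, true_and, Finset.mem_image,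
      Finset.mem_offDiag, Function.uncurry_apply_pair, Sym2.mk_isDiag_iff, Finset.mk_mem_sym2_iff, Prod.exists]
    constructor
    · rintro ⟨hxy, hx, hy⟩
      exact ⟨x, y, ⟨hx, hy, hxy⟩, rfl⟩
    · rintro ⟨a, b, ⟨ha, hb, hab⟩, he⟩
      rw [Sym2.eq_iff] at he
      rcases he with ⟨rfl, rfl⟩ | ⟨rfl, rfl⟩
      · exact ⟨hab, ha, hb⟩
      · exact ⟨fun h => hab h.symm, hb, ha⟩

lemma slots_filter_card {k : ℕ} (A : Finset (Fin k)) :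
    ((edgeSlots k).filter (fun e => e ∈ A.sym2)).card = A.card.choose 2 := by
  rw [slots_filter_eq, Sym2.card_image_offDiag]

lemma edgeSlots_card (k : ℕ) : (edgeSlots k).card = k.choose 2 := by
  have : edgeSlots k = (edgeSlots k).filter (fun e => e ∈ (Finset.univ : Finset (Fin k)).sym2) := by
    symm
    apply Finset.filter_eq_self.2
    intro e _
    simp [Finset.mem_sym2_iff]
  rw [this, slots_filter_card]
  simp

lemma edgesOf_eq {k : ℕ} (s : Finset (Sym2 (Fin k))) (A : Finset (Fin k))
    (hs : s ⊆ edgeSlots k) :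
    edgesOf s A = (s ∩ ((edgeSlots k).filter (fun e => e ∈ A.sym2))).card := by
  unfold edgesOf
  congr 1
  ext e
  simp only [mem_filter, Finset.mem_inter]
  constructor
  · rintro ⟨hes, hA⟩
    exact ⟨hes, hs hes, hA⟩
  · tauto

end AuxER

set_option maxHeartbeats 2000000 in
/-- For fixed `γ ∈ (0,1)` and all large `k`: for every `ℓ ∈ {2,…,k−1}` and every fixed
`ℓ`-element vertex subset `A` of `G(k, ⌈γ·C(k,2)⌉)`,
`C(k,ℓ) · P(e(A) ≥ γ·C(ℓ,2) + D_k(ℓ)) ≤ k^{−2}`. -/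
theorem er_flatness_union_bound (γ : ℝ) (hγ0 : 0 < γ) (hγ1 : γ < 1) :
    ∃ k₀ : ℕ, ∀ k ≥ k₀, ∀ ℓ : ℕ, 2 ≤ ℓ → ℓ + 1 ≤ k →
      ∀ A : Finset (Fin k), A.card = ℓ →
        (k.choose ℓ : ℝ) *
          erProb k ⌈γ * (k.choose 2 : ℝ)⌉₊
            (fun s => γ * (ℓ.choose 2 : ℝ) + Dflat k ℓ ≤ (edgesOf s A : ℝ))
          ≤ ((k : ℝ) ^ 2)⁻¹ := by
  classical
  refine ⟨max (max (⌈Real.exp 256⌉₊ + 1) (⌈2 / (1 - γ)⌉₊ + 2)) 1024, ?_⟩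
  intro k hk ℓ hℓ2 hℓk A hA
  have hγ' : (0:ℝ) < 1 - γ := by linarith
  have hk1024 : 1024 ≤ k := le_trans (le_max_right _ _) hk
  have hkexp : ⌈Real.exp 256⌉₊ + 1 ≤ k :=
    le_trans (le_trans (le_max_left _ _) (le_max_left _ _)) hk
  have hkγn : ⌈2 / (1 - γ)⌉₊ + 2 ≤ k :=
    le_trans (le_trans (le_max_right _ _) (le_max_left _ _)) hk
  have hk1024r : (1024:ℝ) ≤ k := by exact_mod_cast hk1024
  have hk0 : (0:ℝ) < k := by linarith
  set L := Real.log k with hLdef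
  have hL : (256:ℝ) ≤ L := by
    have h1 : Real.exp 256 ≤ (k:ℝ) := by
      calc Real.exp 256 ≤ (⌈Real.exp 256⌉₊ : ℝ) := Nat.le_ceil _
        _ ≤ (k:ℝ) := by exact_mod_cast le_trans (Nat.le_succ _) hkexp
    calc (256:ℝ) = Real.log (Real.exp 256) := (Real.log_exp _).symm
      _ ≤ L := Real.log_le_log (Real.exp_pos _) h1
  have hL0 : (0:ℝ) < L := by linarith
  have hkγr : 2 / (1 - γ) ≤ (k:ℝ) - 1 := by
    have h1 : 2 / (1 - γ) ≤ (⌈2 / (1 - γ)⌉₊ : ℝ) := Nat.le_ceil _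
    have h2 : (⌈2 / (1 - γ)⌉₊ + 2 : ℝ) ≤ (k:ℝ) := by exact_mod_cast hkγn
    linarith
  set S := k.choose 2 with hSdef
  set T := ℓ.choose 2 with hTdef
  set W := S - T with hWdef
  set m := ⌈γ * (S : ℝ)⌉₊ with hmdef
  have hk3 : 3 ≤ k := by omega
  have hTS : T + (k - 1) ≤ S := by
    have h1 : T ≤ (k-1).choose 2 := Nat.choose_le_choose 2 (by omega)
    have h2 : ((k-1)+1).choose 2 = (k-1).choose 1 + (k-1).choose 2 :=
      Nat.choose_succ_succ (k-1) 1
    rw [Nat.choose_one_right] at h2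
    have h4 : S = ((k-1)+1).choose 2 := by rw [hSdef]; congr 1; omega
    omega
  have hT1 : 1 ≤ T := Nat.choose_pos hℓ2
  have hTleS : T ≤ S := by omega
  have hTW : T + W = S := by omega
  have hWk : k - 1 ≤ W := by omega
  have hS1 : 0 < S := by omega
  have hmS : m ≤ S := by
    rw [hmdef]
    apply Nat.ceil_le.2
    have : γ * (S:ℝ) ≤ 1 * (S:ℝ) :=
      mul_le_mul_of_nonneg_right (le_of_lt hγ1) (by positivity)
    simpa using this
  have hm1 : 1 ≤ m := by
    rw [hmdef]
    apply Nat.one_le_ceil_iff.2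
    have hS0 : (0:ℝ) < S := by exact_mod_cast hS1
    positivity
  have hSr : (S:ℝ) = k * ((k:ℝ) - 1) / 2 := Nat.cast_choose_two (K := ℝ) k
  have hTr : (T:ℝ) = ℓ * ((ℓ:ℝ) - 1) / 2 := Nat.cast_choose_two (K := ℝ) ℓ
  have hWr : (W:ℝ) = (S:ℝ) - T := by rw [hWdef]; exact Nat.cast_sub hTleS
  have hℓr : (2:ℝ) ≤ ℓ := by exact_mod_cast hℓ2
  have hℓkr : (ℓ:ℝ) + 1 ≤ k := by exact_mod_cast hℓk
  have hS0 : (0:ℝ) < S := by exact_mod_cast hS1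
  have hT0 : (0:ℝ) < T := by exact_mod_cast hT1
  have hTSr : (T:ℝ) ≤ S := by exact_mod_cast hTleS
  have hWlb : (ℓ:ℝ) * ((k:ℝ) - ℓ) ≤ (W:ℝ) := by
    rw [hWr, hSr, hTr]
    nlinarith [hℓkr, mul_nonneg (by linarith : (0:ℝ) ≤ (k:ℝ) - ℓ - 1)
      (by linarith : (0:ℝ) ≤ (k:ℝ) - ℓ)]
  have hWkr : (k:ℝ) - 1 ≤ W := by
    have h2 : ((k - 1 : ℕ):ℝ) ≤ (W:ℝ) := by exact_mod_cast hWk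
    have h3 : ((k - 1 : ℕ):ℝ) = (k:ℝ) - 1 := by
      rw [Nat.cast_sub (by omega)]; norm_num
    linarith
  have hW0 : (0:ℝ) < W := by linarith
  have hγW : 2 ≤ (1 - γ) * (W:ℝ) := by
    have h1 : 2 ≤ (1 - γ) * ((k:ℝ) - 1) := by
      rw [div_le_iff₀ hγ'] at hkγr; linarith
    nlinarith [mul_le_mul_of_nonneg_left hWkr hγ'.le]
  have hγW0' : (0:ℝ) ≤ γ * W := by positivity
  have hW2 : (2:ℝ) ≤ W := by nlinarith
  set u := Real.sqrt ℓ with hudef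
  have hu2 : u ^ 2 = (ℓ:ℝ) := Real.sq_sqrt (by positivity)
  have huu : u * u = (ℓ:ℝ) := by rw [← hu2]; ring
  have hu0 : 0 < u := Real.sqrt_pos.2 (by linarith)
  have hu1 : 1 ≤ u := by nlinarith [hu2, hℓr, hu0]
  set D := Dflat k ℓ with hDdef
  have hDeq : D = ((min T W : ℕ):ℝ) / u * L := rfl
  have hminr : ((min T W : ℕ):ℝ) = min (T:ℝ) (W:ℝ) := by push_cast; rfl
  have hmin_lb : u * u / 2 ≤ ((min T W : ℕ):ℝ) := by
    rw [hminr]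
    have h1 : u * u / 2 ≤ (T:ℝ) := by rw [hTr, huu]; nlinarith
    have h2 : u * u / 2 ≤ (W:ℝ) := by
      rw [huu]
      nlinarith [hWlb, mul_le_mul_of_nonneg_left
        (by linarith : (1:ℝ) ≤ (k:ℝ) - ℓ) (by linarith : (0:ℝ) ≤ (ℓ:ℝ))]
    exact le_min h1 h2
  have hD_lb : u * L / 2 ≤ D := by
    rw [hDeq, div_mul_eq_mul_div, le_div_iff₀ hu0]
    calc u * L / 2 * u = (u * u / 2) * L := by ring
      _ ≤ ((min T W : ℕ):ℝ) * L := mul_le_mul_of_nonneg_right hmin_lb (le_of_lt hL0)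
  have hD128 : (128:ℝ) ≤ D := by
    nlinarith [hD_lb, mul_le_mul hu1 hL (by norm_num) (by linarith : (0:ℝ) ≤ u)]
  have hD0 : (0:ℝ) < D := by linarith
  set a := ⌈γ * (T:ℝ) + D⌉₊ with hadef
  have haL : γ * (T:ℝ) + D ≤ (a:ℝ) := Nat.le_ceil _
  have haU : (a:ℝ) < γ * (T:ℝ) + D + 1 := Nat.ceil_lt_add_one (by positivity)
  set Tsl := (edgeSlots k).filter (fun e => e ∈ A.sym2) with hTsldef
  have hTslcard : Tsl.card = T := by rw [hTsldef, slots_filter_card, hA]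
  have hTslsub : Tsl ⊆ edgeSlots k := Finset.filter_subset _ _
  have hUcard : (edgeSlots k).card = S := edgeSlots_card k
  have hGcard : (graphsWithEdges k m).card = S.choose m := by
    rw [graphsWithEdges, Finset.card_powersetCard, hUcard]
  have hEv : ∀ s : Finset (Sym2 (Fin k)), s ∈ graphsWithEdges k m →
      γ * (T:ℝ) + D ≤ (edgesOf s A : ℝ) → a ≤ (s ∩ Tsl).card := by
    intro s hs hevent
    have hsub : s ⊆ edgeSlots k := (Finset.mem_powersetCard.1 hs).1
    have h1 : a ≤ edgesOf s A := Nat.ceil_le.2 hevent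
    rwa [edgesOf_eq s A hsub, ← hTsldef] at h1
  unfold erProb
  rw [hGcard]
  simp only [Finset.filter_congr_decidable]
  by_cases hcase : a ≤ m ∧ a ≤ T
  case neg =>
    have hempty : ((graphsWithEdges k m).filter
        (fun s => γ * (T:ℝ) + D ≤ (edgesOf s A : ℝ))) = ∅ := by
      rw [Finset.filter_eq_empty_iff]
      intro s hs hevent
      have h1 : a ≤ (s ∩ Tsl).card := hEv s hs hevent
      have h2 : (s ∩ Tsl).card ≤ m := by
        calc (s ∩ Tsl).card ≤ s.card := Finset.card_le_card Finset.inter_subset_left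
          _ = m := (Finset.mem_powersetCard.1 hs).2
      have h3 : (s ∩ Tsl).card ≤ T := by
        calc (s ∩ Tsl).card ≤ Tsl.card := Finset.card_le_card Finset.inter_subset_right
          _ = T := hTslcard
      omega
    rw [hempty]
    simp only [Finset.card_empty, Nat.cast_zero, zero_div, mul_zero]
    positivity
  case pos =>
  obtain ⟨ham, haT⟩ := hcase
  set j := ⌈D / 2⌉₊ with hjdef
  have hjL : D / 2 ≤ (j:ℝ) := Nat.le_ceil _
  have hjU : (j:ℝ) < D / 2 + 1 := Nat.ceil_lt_add_one (by positivity)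
  have hj0 : (0:ℝ) ≤ j := Nat.cast_nonneg j
  have haTr : (a:ℝ) ≤ T := by exact_mod_cast haT
  have hγT0 : (0:ℝ) ≤ γ * T := by positivity
  have hja : j ≤ a :=
    le_of_lt (by exact_mod_cast (show (j:ℝ) < (a:ℝ) by linarith))
  have hjm : j ≤ m := hja.trans ham
  have hmr_ub : (m:ℝ) < γ * S + 1 := Nat.ceil_lt_add_one (by positivity)
  have hmr_lb : γ * (S:ℝ) ≤ m := Nat.le_ceil _
  set N := (((edgeSlots k).powersetCard m).filter (fun s => a ≤ (s ∩ Tsl).card)).card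
    with hNdef
  have hfilterN : ((graphsWithEdges k m).filter
      (fun s => γ * (T:ℝ) + D ≤ (edgesOf s A : ℝ))).card ≤ N := by
    apply Finset.card_le_card
    intro s hs
    rw [Finset.mem_filter] at hs ⊢
    exact ⟨hs.1, hEv s hs.1 hs.2⟩
  have hchoose0 : (0:ℝ) < (S.choose m : ℝ) := by exact_mod_cast Nat.choose_pos hmS
  have hEvP : ((((graphsWithEdges k m).filter
      (fun s => γ * (T:ℝ) + D ≤ (edgesOf s A : ℝ))).card : ℝ)) / (S.choose m : ℝ)
      ≤ (N:ℝ) / (S.choose m : ℝ) := by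
    apply (div_le_div_iff_of_pos_right hchoose0).2
    exact_mod_cast hfilterN
  by_cases hTle : T ≤ W
  · -- CASE 1 : min(T,W) = T
    have hminT : min T W = T := min_eq_left hTle
    have hDT : D = (T:ℝ) / u * L := by rw [hDeq, hminT]
    have hDT2 : D ≤ (1 - γ) * T := by linarith
    have hLu : L ≤ (1 - γ) * u := by
      rw [hDT, div_mul_eq_mul_div, div_le_iff₀ hu0] at hDT2
      have h2 : (T:ℝ) * L ≤ (T:ℝ) * ((1 - γ) * u) := by linarith [hDT2]
      exact le_of_mul_le_mul_left h2 hT0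
    have hLu1 : L ≤ u := by linarith only [hLu, mul_nonneg hγ0.le hu0.le]
    have hstar := master (edgeSlots k) Tsl hTslsub m a j hjm (by rw [hUcard]; exact hmS)
    rw [hUcard, hTslcard] at hstar
    set x := (a:ℝ) + 1 - j with hxdef
    have hxcast : ((a + 1 - j : ℕ):ℝ) = x := by
      rw [Nat.cast_sub (by omega)]; push_cast; ring
    have hx_lb : γ * (T:ℝ) + D / 2 ≤ x := by rw [hxdef]; linarith
    have hx0 : (0:ℝ) < x := by linarith
    set r := (T:ℝ) * m / (x * S) with hrdef
    have hm0 : (0:ℝ) < m := by exact_mod_cast hm1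
    have hr0 : (0:ℝ) < r := by positivity
    have hP2 : (N:ℝ) / (S.choose m : ℝ) ≤ r ^ j := by
      have hc : ((N * ((a + 1 - j) ^ j * S ^ j) : ℕ) : ℝ)
          ≤ ((T ^ j * m ^ j * S.choose m : ℕ) : ℝ) := by exact_mod_cast hstar
      push_cast at hc
      rw [hxcast] at hc
      rw [div_le_iff₀ hchoose0, hrdef, div_pow, div_mul_eq_mul_div,
        le_div_iff₀ (by positivity)]
      calc (N:ℝ) * (x * S) ^ j = (N:ℝ) * (x ^ j * (S:ℝ) ^ j) := by rw [mul_pow]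
        _ ≤ (T:ℝ) ^ j * (m:ℝ) ^ j * (S.choose m : ℝ) := hc
        _ = ((T:ℝ) * m) ^ j * (S.choose m : ℝ) := by rw [mul_pow]
    have hTeq : u ^ 2 * (u ^ 2 - 1) / 2 = (T:ℝ) := by rw [hTr, hu2]
    have hu256 : (256:ℝ) ≤ u := by linarith
    have hDleT : D ≤ (T:ℝ) := by
      rw [hDT, div_mul_eq_mul_div, div_le_iff₀ hu0]
      linarith only [mul_le_mul_of_nonneg_left hLu1 hT0.le]
    have hT2 : (2:ℝ) ≤ T := by
      have husq : (65536:ℝ) ≤ u ^ 2 := by nlinarith only [hu256, hu0]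
      nlinarith only [hTeq, husq]
    have hx_ub : x ≤ 3 * T := by
      rw [hxdef]
      linarith only [haU, hDleT, hT2, hj0, mul_nonneg hγ'.le hT0.le]
    have hr_ub : r ≤ (γ * T + 1) / x := by
      rw [hrdef]
      have h1 : (T:ℝ) * m ≤ (γ * T + 1) * S := by
        linarith only [mul_le_mul_of_nonneg_left hmr_ub.le hT0.le, hTSr]
      calc (T:ℝ) * m / (x * S) ≤ ((γ * T + 1) * S) / (x * S) :=
            (div_le_div_iff_of_pos_right (by positivity)).2 h1
        _ = (γ * T + 1) / x := mul_div_mul_right _ _ (ne_of_gt hS0)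
    have h1r : (D / 2 - 1) / x ≤ 1 - r := by
      have h2 : (D / 2 - 1) / x ≤ (x - (γ * T + 1)) / x :=
        (div_le_div_iff_of_pos_right hx0).2 (by linarith)
      have h3 : (x - (γ * T + 1)) / x = 1 - (γ * T + 1) / x := by field_simp
      linarith
    have hkey : ((ℓ:ℝ) + 2) * L ≤ (j:ℝ) * (1 - r) := by
      have hstep : (D / 2) * ((D / 2 - 1) / x) ≤ (j:ℝ) * (1 - r) := by
        apply mul_le_mul hjL h1r _ hj0
        apply div_nonneg (by linarith) (le_of_lt hx0)
      have hfrac : (D / 4) / (3 * T) ≤ (D / 2 - 1) / x :=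
        div_le_div₀ (by linarith) (by linarith) hx0 hx_ub
      have hstep2 : (D / 2) * ((D / 4) / (3 * T)) ≤ (D / 2) * ((D / 2 - 1) / x) :=
        mul_le_mul_of_nonneg_left hfrac (by linarith)
      have heq : (D / 2) * ((D / 4) / (3 * T)) = (T:ℝ) * L ^ 2 / (24 * u ^ 2) := by
        rw [hDT]
        field_simp
        ring
      have hfin : ((ℓ:ℝ) + 2) * L ≤ (T:ℝ) * L ^ 2 / (24 * u ^ 2) := by
        rw [le_div_iff₀ (by positivity), ← hu2, ← hTeq]
        have key1 : 48 * (u^2 + 2) ≤ (u^2 - 1) * L := by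
          linarith only [mul_nonneg (by linarith only [hu2, hℓr] : (0:ℝ) ≤ u^2 - 1)
            (by linarith only [hL] : (0:ℝ) ≤ L - 256), hu2, hℓr, hL]
        linarith only [mul_le_mul_of_nonneg_right key1
          (by positivity : (0:ℝ) ≤ u^2 * L / 2)]
      linarith
    have hQ : (k.choose ℓ : ℝ) ≤ (k:ℝ) ^ ℓ := by exact_mod_cast Nat.choose_le_pow k ℓ
    refine le_trans (mul_le_mul_of_nonneg_left hEvP (by positivity)) ?_
    exact final_step k ℓ j (by omega) r _ _ hQ (by positivity) (div_nonneg (Nat.cast_nonneg _) (Nat.cast_nonneg _)) hr0 hP2 hkey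
  · -- CASE 2 : min(T,W) = W
    have hminW : min T W = W := min_eq_right (le_of_not_ge hTle)
    have hDW : D = (W:ℝ) / u * L := by rw [hDeq, hminW]
    have hWTr : (W:ℝ) < T := by exact_mod_cast not_le.1 hTle
    have hST2 : (S:ℝ) = T + W := by rw [hWr]; ring
    have hγS : γ * (S:ℝ) = γ * T + γ * W := by rw [hST2]; ring
    have hk2ℓ : (k:ℝ) ≤ 2 * ℓ := by
      by_contra hcon
      push_neg at hcon
      have h2 : 2 * ℓ < k := by exact_mod_cast hcon
      have h3 : (2 * (ℓ:ℝ) + 1) ≤ k := by exact_mod_cast h2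
      have hS2T : (S:ℝ) < 2 * T := by linarith
      rw [hSr, hTr] at hS2T
      linarith only [hS2T, hℓr, sq_nonneg (ℓ:ℝ), mul_le_mul h3
        (by linarith : 2*(ℓ:ℝ) ≤ (k:ℝ) - 1)
        (by linarith : (0:ℝ) ≤ 2*(ℓ:ℝ)) (by linarith : (0:ℝ) ≤ (k:ℝ))]
    have huL : L ≤ u := by
      have h1 : L ≤ Real.sqrt ((k:ℝ) / 2) := log_le_sqrt_half hk1024
      have h2 : Real.sqrt ((k:ℝ) / 2) ≤ u := by
        rw [hudef]; exact Real.sqrt_le_sqrt (by linarith)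
      linarith
    have hDleW : D ≤ (W:ℝ) := by
      rw [hDW, div_mul_eq_mul_div, div_le_iff₀ hu0]
      linarith only [mul_le_mul_of_nonneg_left huL hW0.le]
    have hmWa : m ≤ W + a := by
      have h1 : (m:ℝ) < ((W + a : ℕ):ℝ) := by push_cast; linarith
      exact_mod_cast le_of_lt (show m < W + a by exact_mod_cast h1)
    set b := W + a - m with hbdef
    have hbm : b + m = W + a := by omega
    have hbr : (b:ℝ) = (W:ℝ) + a - m := by
      rw [hbdef, Nat.cast_sub hmWa]; push_cast; ring
    have hb_lb : (1 - γ) * W + D - 1 ≤ (b:ℝ) := by rw [hbr]; linarith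
    have hjb : j ≤ b :=
      le_of_lt (by exact_mod_cast (show (j:ℝ) < (b:ℝ) by linarith))
    have hbSm : b ≤ S - m := by omega
    set Wsl := edgeSlots k \ Tsl with hWsldef
    have hWslcard : Wsl.card = W := by
      rw [hWsldef, Finset.card_sdiff_of_subset hTslsub, hUcard, hTslcard]
    have hcc := compl_count (edgeSlots k) Tsl hTslsub m a b
      (by rw [hUcard]; exact hmS)
      (by rw [← hWsldef, hWslcard]; omega)
    rw [hUcard, ← hWsldef] at hcc
    have hstar := master (edgeSlots k) Wsl Finset.sdiff_subset (S - m) b j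
      (hjb.trans hbSm) (by rw [hUcard]; omega)
    rw [hUcard, hWslcard, Nat.choose_symm hmS] at hstar
    set x := (b:ℝ) + 1 - j with hxdef
    have hxcast : ((b + 1 - j : ℕ):ℝ) = x := by
      rw [Nat.cast_sub (by omega)]; push_cast; ring
    have hx_lb : (1 - γ) * W + D / 2 - 2 ≤ x := by rw [hxdef]; linarith
    have hγW0 : (0:ℝ) ≤ (1 - γ) * W := by positivity
    have hx0 : (0:ℝ) < x := by linarith
    have hSmr : ((S - m : ℕ):ℝ) = (S:ℝ) - m := Nat.cast_sub hmS
    have hSm_ub : ((S - m : ℕ):ℝ) ≤ (1 - γ) * S := by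
      rw [hSmr]; linarith only [hmr_lb]
    have hWS : (W:ℝ) ≤ S := by linarith
    have hSm1 : (1:ℝ) ≤ ((S - m : ℕ):ℝ) := by
      rw [hSmr]
      linarith only [hmr_ub, hγW, mul_le_mul_of_nonneg_left hWS hγ'.le]
    set r := (W:ℝ) * ((S - m : ℕ):ℝ) / (x * S) with hrdef
    have hr0 : (0:ℝ) < r :=
      div_pos (mul_pos hW0 (by linarith)) (by positivity)
    have hP2 : (N:ℝ) / (S.choose m : ℝ) ≤ r ^ j := by
      rw [hNdef, hcc]
      have hc : (((((edgeSlots k).powersetCard (S - m)).filter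
            (fun s => b ≤ (s ∩ Wsl).card)).card * ((b + 1 - j) ^ j * S ^ j) : ℕ) : ℝ)
          ≤ ((W ^ j * (S - m) ^ j * S.choose m : ℕ) : ℝ) := by exact_mod_cast hstar
      push_cast at hc
      rw [hxcast] at hc
      rw [div_le_iff₀ hchoose0, hrdef, div_pow, div_mul_eq_mul_div,
        le_div_iff₀ (by positivity)]
      calc ((((edgeSlots k).powersetCard (S - m)).filter
            (fun s => b ≤ (s ∩ Wsl).card)).card : ℝ) * (x * S) ^ j
          = ((((edgeSlots k).powersetCard (S - m)).filter
            (fun s => b ≤ (s ∩ Wsl).card)).card : ℝ) * (x ^ j * (S:ℝ) ^ j) := by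
            rw [mul_pow]
        _ ≤ (W:ℝ) ^ j * ((S - m : ℕ):ℝ) ^ j * (S.choose m : ℝ) := hc
        _ = ((W:ℝ) * ((S - m : ℕ):ℝ)) ^ j * (S.choose m : ℝ) := by rw [mul_pow]
    have hb_ub : (b:ℝ) ≤ (1 - γ) * W + D + 1 := by rw [hbr]; linarith
    have hx_ub : x ≤ 3 * W := by rw [hxdef]; linarith
    have hr_ub : r ≤ ((1 - γ) * W) / x := by
      rw [hrdef]
      have h1 : (W:ℝ) * ((S - m : ℕ):ℝ) ≤ ((1 - γ) * W) * S := by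
        linarith only [mul_le_mul_of_nonneg_left hSm_ub hW0.le]
      calc (W:ℝ) * ((S - m : ℕ):ℝ) / (x * S) ≤ (((1 - γ) * W) * S) / (x * S) :=
            (div_le_div_iff_of_pos_right (by positivity)).2 h1
        _ = ((1 - γ) * W) / x := mul_div_mul_right _ _ (ne_of_gt hS0)
    have h1r : (D / 2 - 2) / x ≤ 1 - r := by
      have h2 : (D / 2 - 2) / x ≤ (x - (1 - γ) * W) / x :=
        (div_le_div_iff_of_pos_right hx0).2 (by linarith)
      have h3 : (x - (1 - γ) * W) / x = 1 - ((1 - γ) * W) / x := by field_simp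
      linarith
    have hkℓcast : ((k - ℓ : ℕ):ℝ) = (k:ℝ) - ℓ := Nat.cast_sub (by omega)
    have hkey : (((k - ℓ : ℕ):ℝ) + 2) * L ≤ (j:ℝ) * (1 - r) := by
      rw [hkℓcast]
      have hstep : (D / 2) * ((D / 2 - 2) / x) ≤ (j:ℝ) * (1 - r) := by
        apply mul_le_mul hjL h1r _ hj0
        apply div_nonneg (by linarith) (le_of_lt hx0)
      have hfrac : (D / 4) / (3 * W) ≤ (D / 2 - 2) / x :=
        div_le_div₀ (by linarith) (by linarith) hx0 hx_ub
      have hstep2 : (D / 2) * ((D / 4) / (3 * W)) ≤ (D / 2) * ((D / 2 - 2) / x) :=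
        mul_le_mul_of_nonneg_left hfrac (by linarith)
      have heq : (D / 2) * ((D / 4) / (3 * W)) = (W:ℝ) * L ^ 2 / (24 * u ^ 2) := by
        rw [hDW]
        field_simp
        ring
      have hfin : ((k:ℝ) - ℓ + 2) * L ≤ (W:ℝ) * L ^ 2 / (24 * u ^ 2) := by
        rw [le_div_iff₀ (by positivity)]
        have hkℓ1 : (1:ℝ) ≤ (k:ℝ) - ℓ := by linarith
        have hWlb2 : u ^ 2 * ((k:ℝ) - ℓ) ≤ (W:ℝ) := by rw [hu2]; exact hWlb
        have key1 : 24 * ((k:ℝ) - ℓ + 2) ≤ ((k:ℝ) - ℓ) * L := by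
          linarith only [hL, hkℓ1, mul_nonneg (by linarith : (0:ℝ) ≤ (k:ℝ) - ℓ - 1)
            (by linarith : (0:ℝ) ≤ L - 256)]
        linarith only [mul_le_mul_of_nonneg_right key1
            (by positivity : (0:ℝ) ≤ u^2 * L),
          mul_le_mul_of_nonneg_right hWlb2 (by positivity : (0:ℝ) ≤ L ^ 2)]
      linarith
    have hQ : (k.choose ℓ : ℝ) ≤ (k:ℝ) ^ (k - ℓ) := by
      have h1 : k.choose ℓ = k.choose (k - ℓ) := (Nat.choose_symm (by omega)).symm
      rw [h1]
      exact_mod_cast Nat.choose_le_pow k (k - ℓ)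
    refine le_trans (mul_le_mul_of_nonneg_left hEvP (by positivity)) ?_
    exact final_step k (k - ℓ) j (by omega) r _ _ hQ (by positivity) (div_nonneg (Nat.cast_nonneg _) (Nat.cast_nonneg _))
      hr0 hP2 hkey
end

section
/- Let γ ∈ (0,1), let k ≥ 3 and ℓ ∈ {2,…,k−1} be integers, set S = binom(k,2), T = binom(ℓ,2), R = S−T, and let c = 1/max(γ, 1−γ). Fix a vertex subset A of size ℓ of the Erdős–Rényi random graph G(k, ⌈γS⌉), and for 0 ≤ L ≤ T let C(L) = P(e(A) = L) = binom(T,L)·binom(R, ⌈γS⌉−L)/binom(S, ⌈γS⌉). Then for every integer r ≥ 1 with ⌈γT⌉ + r ≤ T, one has C(⌈γT⌉ + r) ≤ e^{−c·r·(r−1)/(2·min(R,T))}. -/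
set_option maxHeartbeats 1600000

section AuxLemmas

open Finset in
private lemma card_filter_not_isDiag' {α : Type*} [DecidableEq α] (A : Finset α) :
    ((A.sym2).filter fun e => ¬ e.IsDiag).card = A.card.choose 2 := by
  rw [Finset.sym2_eq_image, Sym2.filter_image_mk_not_isDiag, Sym2.card_image_offDiag]

open Finset in
private lemma split_count' {α : Type*} [DecidableEq α] (U B : Finset α) (hB : B ⊆ U) (m L : ℕ)
    (hLm : L ≤ m) :
    ((U.powersetCard m).filter fun s => (s ∩ B).card = L).card
      = B.card.choose L * (U \ B).card.choose (m - L) := by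
  rw [← Finset.card_powersetCard, ← Finset.card_powersetCard, ← Finset.card_product]
  apply Finset.card_bij' (fun s _ => (s ∩ B, s \ B)) (fun p _ => p.1 ∪ p.2)
  · rintro s hs
    simp only [Finset.mem_filter, Finset.mem_powersetCard] at hs
    obtain ⟨⟨hsU, hsc⟩, hL⟩ := hs
    have h1 : (s \ B).card + (s ∩ B).card = s.card := Finset.card_sdiff_add_card_inter s B
    simp only [Finset.mem_product, Finset.mem_powersetCard]
    exact ⟨⟨Finset.inter_subset_right, hL⟩, Finset.sdiff_subset_sdiff hsU le_rfl, by omega⟩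
  · rintro ⟨p, q⟩ hp
    simp only [Finset.mem_product, Finset.mem_powersetCard] at hp
    obtain ⟨⟨hpB, hpc⟩, hqU, hqc⟩ := hp
    have hdisj : Disjoint p q := Finset.disjoint_sdiff.mono hpB hqU
    have hqB : Disjoint q B := (Finset.sdiff_disjoint).mono hqU le_rfl
    simp only [Finset.mem_filter, Finset.mem_powersetCard]
    refine ⟨⟨Finset.union_subset (hpB.trans hB) (hqU.trans (Finset.sdiff_subset)), ?_⟩, ?_⟩
    · rw [Finset.card_union_of_disjoint hdisj]; omega
    · rw [Finset.union_inter_distrib_right, Finset.inter_eq_left.2 hpB,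
        Finset.disjoint_iff_inter_eq_empty.1 hqB, Finset.union_empty]
      exact hpc
  · intro s hs
    rw [Finset.union_comm]
    exact Finset.sdiff_union_inter s B
  · rintro ⟨p, q⟩ hp
    simp only [Finset.mem_product, Finset.mem_powersetCard] at hp
    obtain ⟨⟨hpB, hpc⟩, hqU, hqc⟩ := hp
    have hqB : Disjoint q B := (Finset.sdiff_disjoint).mono hqU le_rfl
    have h1 : (p ∪ q) ∩ B = p := by
      rw [Finset.union_inter_distrib_right, Finset.inter_eq_left.2 hpB,
        Finset.disjoint_iff_inter_eq_empty.1 hqB, Finset.union_empty]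
    have h2 : (p ∪ q) \ B = q := by
      rw [Finset.union_sdiff_distrib, Finset.sdiff_eq_empty_iff_subset.2 hpB,
        Finset.empty_union, Finset.sdiff_eq_self_of_disjoint hqB]
    simp [h1, h2]

private lemma exponent_ineq' (γ T R i : ℝ) (hγ0 : 0 < γ) (hγ1 : γ < 1) (hi : 1 ≤ i)
    (ha : i + 1 ≤ (1 - γ) * T) (hb : i ≤ γ * R) (hTR : R ≤ T → 2 * T ≤ R * R) :
    i / (max γ (1 - γ) * min R T)
      ≤ i / ((1 - γ) * T) + (i - 1) / (γ * R) + (i + 1) / (γ * T + i + 1)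
        + i / ((1 - γ) * R + i) := by
  set μ := max γ (1 - γ) with hμdef
  have hγμ : γ ≤ μ := le_max_left _ _
  have h1γμ : 1 - γ ≤ μ := le_max_right _ _
  have hμhalf : 1 / 2 ≤ μ := by
    rcases le_total γ (1 - γ) with h | h
    · exact le_trans (by linarith) h1γμ
    · exact le_trans (by linarith) hγμ
  have hμ0 : 0 < μ := by linarith
  have hA0 : 0 < (1 - γ) * T := by linarith
  have hB0 : 0 < γ * R := by linarith
  have hT0 : 0 < T := by nlinarith
  have hR0 : 0 < R := by nlinarith
  have hC0 : 0 < γ * T + i + 1 := by positivity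
  have hD0 : 0 < (1 - γ) * R + i := by nlinarith
  have hi0 : (0:ℝ) < i := by linarith
  rcases le_total T R with hTR' | hTR'
  · rw [min_eq_right hTR']
    have h1 : i / (μ * T) ≤ i / ((1 - γ) * T) := by
      apply div_le_div_of_nonneg_left hi0.le hA0
      nlinarith
    have h2 : 0 ≤ (i - 1) / (γ * R) := div_nonneg (by linarith) hB0.le
    have h3 : 0 ≤ (i + 1) / (γ * T + i + 1) := div_nonneg (by linarith) hC0.le
    have h4 : 0 ≤ i / ((1 - γ) * R + i) := div_nonneg hi0.le hD0.le
    linarith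
  · rw [min_eq_left hTR']
    have hRR : 2 * T ≤ R * R := hTR hTR'
    have hμR0 : 0 < μ * R := by positivity
    have t2 : (i - 1) / (μ * R) ≤ (i - 1) / (γ * R) := by
      apply div_le_div_of_nonneg_left (by linarith) hB0
      nlinarith
    have t3 : 2 / T ≤ (i + 1) / (γ * T + i + 1) := by
      rw [div_le_div_iff₀ hT0 hC0]
      nlinarith
    have t4 : 1 / (μ * R + 1) ≤ i / ((1 - γ) * R + i) := by
      rw [div_le_div_iff₀ (by positivity) hD0]
      nlinarith
    have t5 : 1 / (μ * R) ≤ 2 / T + 1 / (μ * R + 1) := by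
      have key : T ≤ 2 * (μ * R) * (μ * R + 1) := by
        nlinarith [mul_nonneg (mul_nonneg (by linarith : (0:ℝ) ≤ 2 * μ - 1)
          (by linarith : (0:ℝ) ≤ 2 * μ + 1)) (mul_nonneg hR0.le hR0.le), hμR0.le]
      rw [div_add_div _ _ (ne_of_gt hT0) (by positivity), div_le_div_iff₀ hμR0 (by positivity)]
      nlinarith
    have hsplit : i / (μ * R) = (i - 1) / (μ * R) + 1 / (μ * R) := by
      rw [← add_div]; ring_nf
    have h1 : 0 ≤ i / ((1 - γ) * T) := div_nonneg hi0.le hA0.le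
    linarith

private lemma ratio_core' (γ T R i : ℝ) (hγ0 : 0 < γ) (hγ1 : γ < 1) (hi : 1 ≤ i)
    (ha : i + 1 ≤ (1 - γ) * T) (hb : i ≤ γ * R) (hTR : R ≤ T → 2 * T ≤ R * R) :
    ((1 - γ) * T - i) * (γ * R + 1 - i)
      ≤ Real.exp (-(1 / max γ (1 - γ)) * i / min R T)
        * ((γ * T + i + 1) * ((1 - γ) * R + i)) := by
  set μ := max γ (1 - γ) with hμdef
  have hμ0 : 0 < μ := lt_of_lt_of_le hγ0 (le_max_left _ _)
  have hA0 : 0 < (1 - γ) * T := by linarith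
  have hB0 : 0 < γ * R := by linarith
  have hT0 : 0 < T := by nlinarith
  have hR0 : 0 < R := by nlinarith
  have hi0 : (0:ℝ) < i := by linarith
  have hC0 : 0 < γ * T + i + 1 := by positivity
  have hD0 : 0 < (1 - γ) * R + i := by nlinarith
  have hmn0 : 0 < min R T := lt_min hR0 hT0
  have e1 : ((1 - γ) * T - i) / ((1 - γ) * T) = 1 - i / ((1 - γ) * T) := by
    rw [sub_div, div_self hA0.ne']
  have e2 : (γ * R + 1 - i) / (γ * R) = 1 - (i - 1) / (γ * R) := by
    rw [eq_sub_iff_add_eq, ← add_div, div_eq_one_iff_eq hB0.ne']; ring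
  have e3 : γ * T / (γ * T + i + 1) = 1 - (i + 1) / (γ * T + i + 1) := by
    rw [eq_sub_iff_add_eq, ← add_div, div_eq_one_iff_eq hC0.ne']; ring
  have e4 : (1 - γ) * R / ((1 - γ) * R + i) = 1 - i / ((1 - γ) * R + i) := by
    rw [eq_sub_iff_add_eq, ← add_div, div_eq_one_iff_eq hD0.ne']
  have g1 : ((1 - γ) * T - i) / ((1 - γ) * T) ≤ Real.exp (-(i / ((1 - γ) * T))) := by
    rw [e1]; linarith [Real.add_one_le_exp (-(i / ((1 - γ) * T)))]
  have g2 : (γ * R + 1 - i) / (γ * R) ≤ Real.exp (-((i - 1) / (γ * R))) := by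
    rw [e2]; linarith [Real.add_one_le_exp (-((i - 1) / (γ * R)))]
  have g3 : γ * T / (γ * T + i + 1) ≤ Real.exp (-((i + 1) / (γ * T + i + 1))) := by
    rw [e3]; linarith [Real.add_one_le_exp (-((i + 1) / (γ * T + i + 1)))]
  have g4 : (1 - γ) * R / ((1 - γ) * R + i) ≤ Real.exp (-(i / ((1 - γ) * R + i))) := by
    rw [e4]; linarith [Real.add_one_le_exp (-(i / ((1 - γ) * R + i)))]
  have p2 : 0 ≤ (γ * R + 1 - i) / (γ * R) := div_nonneg (by linarith) hB0.le
  have p3 : 0 ≤ γ * T / (γ * T + i + 1) := div_nonneg (by nlinarith) hC0.le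
  have p4 : 0 ≤ (1 - γ) * R / ((1 - γ) * R + i) := div_nonneg (by nlinarith) hD0.le
  have hprod : (((1 - γ) * T - i) / ((1 - γ) * T)) * ((γ * R + 1 - i) / (γ * R))
      * (γ * T / (γ * T + i + 1)) * ((1 - γ) * R / ((1 - γ) * R + i))
      ≤ Real.exp (-(i / ((1 - γ) * T))) * Real.exp (-((i - 1) / (γ * R)))
        * Real.exp (-((i + 1) / (γ * T + i + 1))) * Real.exp (-(i / ((1 - γ) * R + i))) := by
    apply mul_le_mul (mul_le_mul (mul_le_mul g1 g2 p2 (Real.exp_pos _).le) g3 p3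
      (by positivity)) g4 p4 (by positivity)
  have hexp : Real.exp (-(i / ((1 - γ) * T))) * Real.exp (-((i - 1) / (γ * R)))
        * Real.exp (-((i + 1) / (γ * T + i + 1))) * Real.exp (-(i / ((1 - γ) * R + i)))
      ≤ Real.exp (-(1 / μ) * i / min R T) := by
    rw [← Real.exp_add, ← Real.exp_add, ← Real.exp_add, Real.exp_le_exp]
    have hsum := exponent_ineq' γ T R i hγ0 hγ1 hi ha hb hTR
    rw [← hμdef] at hsum
    have hxeq : -(1 / μ) * i / min R T = -(i / (μ * min R T)) := by
      rw [neg_mul, neg_div, one_div, inv_mul_eq_div, div_div]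
    rw [hxeq]
    linarith
  have hid : ((1 - γ) * T - i) * (γ * R + 1 - i)
      = ((((1 - γ) * T - i) / ((1 - γ) * T)) * ((γ * R + 1 - i) / (γ * R))
        * (γ * T / (γ * T + i + 1)) * ((1 - γ) * R / ((1 - γ) * R + i)))
        * ((γ * T + i + 1) * ((1 - γ) * R + i)) := by
    have h1γ : 1 - γ ≠ 0 := (by linarith : (0:ℝ) < 1 - γ).ne'
    field_simp
  rw [hid]
  exact mul_le_mul_of_nonneg_right (le_trans hprod hexp) (by positivity)

private lemma step_bound' (γ : ℝ) (hγ0 : 0 < γ) (hγ1 : γ < 1) (T R M m L i : ℕ)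
    (hMlb : γ * T ≤ M) (hmub : (m : ℝ) ≤ γ * (T + R) + 1)
    (hTR : (R : ℝ) ≤ T → 2 * (T : ℝ) ≤ R * R)
    (hi : 1 ≤ i) (hL : L = M + i) (hLT : L + 1 ≤ T) (hLm : L + 1 ≤ m) (hmR : m - L ≤ R) :
    (T.choose (L + 1) : ℝ) * (R.choose (m - (L + 1)) : ℝ)
      ≤ (T.choose L : ℝ) * (R.choose (m - L) : ℝ)
        * Real.exp (-(1 / max γ (1 - γ)) * i / min (R : ℝ) (T : ℝ)) := by
  set μ := max γ (1 - γ) with hμdef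
  obtain ⟨j, hj⟩ : ∃ j, m - L = j + 1 := ⟨m - L - 1, by omega⟩
  have hj2 : m - (L + 1) = j := by omega
  have hjR : j + 1 ≤ R := by omega
  have key : T.choose (L + 1) * R.choose j * ((L + 1) * (R - j))
      = T.choose L * R.choose (j + 1) * ((T - L) * (j + 1)) := by
    have h1 := Nat.choose_succ_right_eq T L
    have h2 := Nat.choose_succ_right_eq R j
    calc T.choose (L + 1) * R.choose j * ((L + 1) * (R - j))
        = (T.choose (L + 1) * (L + 1)) * (R.choose j * (R - j)) := by ring
      _ = (T.choose L * (T - L)) * (R.choose (j + 1) * (j + 1)) := by rw [h1, h2]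
      _ = T.choose L * R.choose (j + 1) * ((T - L) * (j + 1)) := by ring
  have keyR : (T.choose (L + 1) : ℝ) * (R.choose j : ℝ) * (((L : ℝ) + 1) * ((R : ℝ) - j))
      = (T.choose L : ℝ) * (R.choose (j + 1) : ℝ) * (((T : ℝ) - L) * ((j : ℝ) + 1)) := by
    have := congrArg (fun n : ℕ => (n : ℝ)) key
    push_cast [Nat.cast_sub (show L ≤ T by omega), Nat.cast_sub (show j ≤ R by omega)] at this
    convert this using 1 <;> ring
  rw [hj, hj2]
  have ha0 : (0:ℝ) ≤ (T.choose L : ℝ) * (R.choose (j + 1) : ℝ) := by positivity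
  have hML : (L : ℝ) = (M : ℝ) + i := by exact_mod_cast hL
  have hi1 : (1 : ℝ) ≤ (i : ℝ) := by exact_mod_cast hi
  have hMlbR : γ * T + i ≤ (L : ℝ) := by rw [hML]; linarith
  have hTL1 : (1 : ℝ) ≤ (T : ℝ) - L := by
    have : ((L : ℕ) : ℝ) + 1 ≤ (T : ℝ) := by exact_mod_cast hLT
    linarith
  have hmL : ((j : ℝ) + 1) = (m : ℝ) - L := by
    have h := Nat.cast_sub (show L ≤ m by omega) (R := ℝ)
    rw [hj] at h
    push_cast at h
    linarith
  have hjnn : (0:ℝ) ≤ (j : ℝ) := Nat.cast_nonneg j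
  have hnum2 : ((j : ℝ) + 1) ≤ γ * R + 1 - i := by
    rw [hmL]; push_cast at hmub ⊢; linarith
  have hnum1 : (T : ℝ) - L ≤ (1 - γ) * T - i := by linarith
  have hb1 : (i : ℝ) ≤ γ * R := by linarith
  have ha1 : (i : ℝ) + 1 ≤ (1 - γ) * T := by linarith
  have hden1 : γ * T + i + 1 ≤ (L : ℝ) + 1 := by linarith
  have hden2 : (1 - γ) * R + i ≤ (R : ℝ) - j := by
    push_cast at hmub
    linarith
  have hRj1 : (1 : ℝ) ≤ (R : ℝ) - j := by
    have : ((j : ℕ) : ℝ) + 1 ≤ (R : ℝ) := by exact_mod_cast hjR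
    linarith
  have hcore := ratio_core' γ T R i hγ0 hγ1 hi1 ha1 hb1 hTR
  rw [← hμdef] at hcore
  set E := Real.exp (-(1 / μ) * (i : ℝ) / min (R : ℝ) (T : ℝ)) with hEdef
  have hE0 : 0 < E := Real.exp_pos _
  have hratio : ((T : ℝ) - L) * ((j : ℝ) + 1) ≤ E * (((L : ℝ) + 1) * ((R : ℝ) - j)) := by
    have hnum : ((T : ℝ) - L) * ((j : ℝ) + 1) ≤ ((1 - γ) * T - i) * (γ * R + 1 - i) :=
      mul_le_mul hnum1 hnum2 (by linarith) (by linarith)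
    have hden : (γ * T + i + 1) * ((1 - γ) * R + i) ≤ ((L : ℝ) + 1) * ((R : ℝ) - j) :=
      mul_le_mul hden1 hden2 (by nlinarith) (by linarith)
    calc ((T : ℝ) - L) * ((j : ℝ) + 1)
        ≤ ((1 - γ) * T - i) * (γ * R + 1 - i) := hnum
      _ ≤ E * ((γ * T + i + 1) * ((1 - γ) * R + i)) := hcore
      _ ≤ E * (((L : ℝ) + 1) * ((R : ℝ) - j)) := mul_le_mul_of_nonneg_left hden hE0.le
  have hposden : (0 : ℝ) < ((L : ℝ) + 1) * ((R : ℝ) - j) := by positivity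
  have h6 : (T.choose (L + 1) : ℝ) * (R.choose j : ℝ) * (((L : ℝ) + 1) * ((R : ℝ) - j))
      ≤ ((T.choose L : ℝ) * (R.choose (j + 1) : ℝ) * E) * (((L : ℝ) + 1) * ((R : ℝ) - j)) := by
    rw [keyR]
    calc (T.choose L : ℝ) * (R.choose (j + 1) : ℝ) * (((T : ℝ) - L) * ((j : ℝ) + 1))
        ≤ (T.choose L : ℝ) * (R.choose (j + 1) : ℝ)
            * (E * (((L : ℝ) + 1) * ((R : ℝ) - j))) := mul_le_mul_of_nonneg_left hratio ha0
      _ = ((T.choose L : ℝ) * (R.choose (j + 1) : ℝ) * E) * (((L : ℝ) + 1) * ((R : ℝ) - j)) := by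
          ring
  exact le_of_mul_le_mul_right h6 hposden

end AuxLemmas

/-- Hypergeometric upper-tail bound (equation (4) of the paper): with `S = C(k,2)`,
`T = C(ℓ,2)`, `R = S−T`, `c = 1/max(γ,1−γ)`, and `C(L) = P(e(A) = L)` for a fixed `ℓ`-set `A`
in `G(k,⌈γS⌉)`, for every integer `r ≥ 1` with `⌈γT⌉ + r ≤ T` we have
`C(⌈γT⌉ + r) ≤ e^{−c·r(r−1)/(2·min(R,T))}`. -/
theorem hypergeometric_tail_bound (γ : ℝ) (hγ0 : 0 < γ) (hγ1 : γ < 1)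
    (k ℓ : ℕ) (hk : 3 ≤ k) (hℓ2 : 2 ≤ ℓ) (hℓk : ℓ + 1 ≤ k)
    (A : Finset (Fin k)) (hA : A.card = ℓ)
    (r : ℕ) (hr : 1 ≤ r) (hrT : ⌈γ * (ℓ.choose 2 : ℝ)⌉₊ + r ≤ ℓ.choose 2) :
    erProb k ⌈γ * (k.choose 2 : ℝ)⌉₊
        (fun s => edgesOf s A = ⌈γ * (ℓ.choose 2 : ℝ)⌉₊ + r)
      ≤ Real.exp (-(1 / max γ (1 - γ)) * (r : ℝ) * ((r : ℝ) - 1) /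
          (2 * (min (k.choose 2 - ℓ.choose 2) (ℓ.choose 2) : ℕ))) := by
  classical
  set S : ℕ := k.choose 2 with hSdef
  set T : ℕ := ℓ.choose 2 with hTdef
  set R : ℕ := S - T with hRdef
  set m : ℕ := ⌈γ * (S : ℝ)⌉₊ with hmdef
  set M : ℕ := ⌈γ * (T : ℝ)⌉₊ with hMdef
  set μ : ℝ := max γ (1 - γ) with hμdef
  have hμ0 : 0 < μ := lt_of_lt_of_le hγ0 (le_max_left _ _)
  -- basic numeric facts
  have hTS : T + ℓ ≤ S := by
    have h1 : (ℓ + 1).choose 2 ≤ k.choose 2 := Nat.choose_le_choose 2 hℓk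
    have h2 : (ℓ + 1).choose 2 = ℓ.choose 1 + ℓ.choose 2 := Nat.choose_succ_succ ℓ 1
    rw [Nat.choose_one_right] at h2
    omega
  have hT1 : 1 ≤ T := by
    have := Nat.choose_le_choose 2 hℓ2
    simpa [Nat.choose_self] using this
  have hRℓ : ℓ ≤ R := by omega
  have hTRS : (T : ℝ) + R = (S : ℝ) := by
    have : T + R = S := by omega
    exact_mod_cast this
  have hmS : m ≤ S := by
    rw [hmdef]
    exact Nat.ceil_le.2 (by nlinarith [Nat.cast_nonneg (α := ℝ) S])
  have hSm_pos : 0 < S.choose m := Nat.choose_pos hmS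
  have hMlb : γ * (T : ℝ) ≤ M := Nat.le_ceil _
  have hmlb : γ * (S : ℝ) ≤ m := Nat.le_ceil _
  have hmub : (m : ℝ) ≤ γ * (S : ℝ) + 1 := by
    have := Nat.ceil_lt_add_one (show (0:ℝ) ≤ γ * S by positivity)
    rw [hmdef]
    linarith
  have hmub' : (m : ℝ) ≤ γ * ((T : ℝ) + R) + 1 := by rw [hTRS]; exact hmub
  have hTR2 : (R : ℝ) ≤ (T : ℝ) → 2 * (T : ℝ) ≤ (R : ℝ) * R := by
    intro h
    have hRT : R ≤ T := by exact_mod_cast h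
    have h2T : 2 * T ≤ ℓ * ℓ := by
      have h3 : T = ℓ * (ℓ - 1) / 2 := by rw [hTdef, Nat.choose_two_right]
      have h4 := Nat.div_mul_le_self (ℓ * (ℓ - 1)) 2
      nlinarith [Nat.div_mul_le_self (ℓ * (ℓ - 1)) 2, Nat.sub_le ℓ 1,
        Nat.mul_le_mul_left ℓ (Nat.sub_le ℓ 1)]
    have : 2 * T ≤ R * R := le_trans h2T (Nat.mul_le_mul hRℓ hRℓ)
    exact_mod_cast this
  have hmMR : m ≤ M + R := by
    have hR2 : (2 : ℝ) ≤ (R : ℝ) := by exact_mod_cast le_trans hℓ2 hRℓ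
    have : (m : ℝ) < (M : ℝ) + R + 1 := by nlinarith
    have : m < M + R + 1 := by exact_mod_cast this
    omega
  -- the set of edge slots inside A
  set B : Finset (Sym2 (Fin k)) := (edgeSlots k).filter (· ∈ A.sym2) with hBdef
  have hBsub : B ⊆ edgeSlots k := Finset.filter_subset _ _
  have hBcard : B.card = T := by
    have hBeq : B = (A.sym2).filter (fun e => ¬ e.IsDiag) := by
      ext e
      simp only [hBdef, Finset.mem_filter, edgeSlots, Finset.mem_univ, true_and]
      tauto
    rw [hBeq, card_filter_not_isDiag', hA]
  have hUcard : (edgeSlots k).card = S := by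
    have h1 : edgeSlots k = ((Finset.univ : Finset (Fin k)).sym2).filter
        (fun e => ¬ e.IsDiag) := by
      ext e
      simp [edgeSlots, Finset.mem_sym2_iff]
    rw [h1, card_filter_not_isDiag', Finset.card_univ, Fintype.card_fin]
  have hU2card : ((edgeSlots k) \ B).card = R := by
    rw [Finset.card_sdiff_of_subset hBsub, hBcard, hUcard]
  have hgcard : (graphsWithEdges k m).card = S.choose m := by
    rw [graphsWithEdges, Finset.card_powersetCard, hUcard]
  -- counting lemma
  have hcount : ∀ L : ℕ, L ≤ m →
      ((graphsWithEdges k m).filter fun s => edgesOf s A = L).card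
        = T.choose L * R.choose (m - L) := by
    intro L hLm
    have hfe : ((graphsWithEdges k m).filter fun s => edgesOf s A = L)
        = (((edgeSlots k).powersetCard m).filter fun s => (s ∩ B).card = L) := by
      apply Finset.filter_congr
      intro s hs
      rw [graphsWithEdges, Finset.mem_powersetCard] at hs
      have hsB : s.filter (· ∈ A.sym2) = s ∩ B := by
        ext e
        simp only [Finset.mem_filter, Finset.mem_inter, hBdef]
        constructor
        · rintro ⟨hes, heA⟩
          exact ⟨hes, hs.1 hes, heA⟩
        · rintro ⟨hes, _, heA⟩
          exact ⟨hes, heA⟩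
      rw [edgesOf, hsB]
    rw [hfe, split_count' (edgeSlots k) B hBsub m L hLm, hBcard, hU2card]
  -- unfold the probability
  have herProb : erProb k m (fun s => edgesOf s A = M + r)
      = (((graphsWithEdges k m).filter fun s => edgesOf s A = M + r).card : ℝ)
        / ((graphsWithEdges k m).card : ℝ) := by
    rw [erProb]
    congr 2
    exact congrArg Finset.card (Finset.filter_congr_decidable _ _ _)
  have hexp_pos : (0:ℝ) < Real.exp (-(1 / μ) * (r : ℝ) * ((r : ℝ) - 1) /
      (2 * ((min R T : ℕ) : ℝ))) := Real.exp_pos _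
  show erProb k m (fun s => edgesOf s A = M + r)
      ≤ Real.exp (-(1 / μ) * (r : ℝ) * ((r : ℝ) - 1) / (2 * ((min R T : ℕ) : ℝ)))
  by_cases hcase : M + r ≤ m
  · -- main case
    have hstep : ∀ i : ℕ, 1 ≤ i → i + 1 ≤ r →
        (T.choose (M + (i+1)) : ℝ) * (R.choose (m - (M + (i+1))) : ℝ)
          ≤ (T.choose (M + i) : ℝ) * (R.choose (m - (M + i)) : ℝ)
            * Real.exp (-(1 / μ) * (i : ℝ) / min (R : ℝ) (T : ℝ)) := by
      intro i hi1 hir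
      have := step_bound' γ hγ0 hγ1 T R M m (M + i) i hMlb hmub' hTR2 hi1 rfl
        (by omega) (by omega) (by omega)
      rw [← hμdef] at this
      convert this using 4 <;> omega
    -- telescoping
    have htele : ∀ i : ℕ, 1 ≤ i → i ≤ r →
        (T.choose (M + i) : ℝ) * (R.choose (m - (M + i)) : ℝ)
          ≤ (T.choose (M + 1) : ℝ) * (R.choose (m - (M + 1)) : ℝ)
            * Real.exp (-(1 / μ) * ((i : ℝ) * ((i : ℝ) - 1) / 2) / min (R : ℝ) (T : ℝ)) := by
      intro i hi1 hir
      induction i with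
      | zero => omega
      | succ n ih =>
        rcases Nat.eq_or_lt_of_le hi1 with h1 | h1
        · -- n + 1 = 1
          have hn0 : n = 0 := by omega
          subst hn0
          norm_num
        · -- n ≥ 1
          have hn1 : 1 ≤ n := by omega
          have hnr : n + 1 ≤ r := hir
          have ihn := ih hn1 (by omega)
          calc (T.choose (M + (n+1)) : ℝ) * (R.choose (m - (M + (n+1))) : ℝ)
              ≤ (T.choose (M + n) : ℝ) * (R.choose (m - (M + n)) : ℝ)
                * Real.exp (-(1 / μ) * (n : ℝ) / min (R : ℝ) (T : ℝ)) :=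
                hstep n hn1 hnr
            _ ≤ ((T.choose (M + 1) : ℝ) * (R.choose (m - (M + 1)) : ℝ)
                * Real.exp (-(1 / μ) * ((n : ℝ) * ((n : ℝ) - 1) / 2) / min (R : ℝ) (T : ℝ)))
                * Real.exp (-(1 / μ) * (n : ℝ) / min (R : ℝ) (T : ℝ)) :=
                mul_le_mul_of_nonneg_right ihn (Real.exp_pos _).le
            _ = (T.choose (M + 1) : ℝ) * (R.choose (m - (M + 1)) : ℝ)
                * Real.exp (-(1 / μ) * (((n:ℝ)+1) * (((n:ℝ)+1) - 1) / 2) / min (R : ℝ) (T : ℝ)) := by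
                rw [mul_assoc, ← Real.exp_add]
                congr 2
                field_simp
                ring
            _ = (T.choose (M + 1) : ℝ) * (R.choose (m - (M + 1)) : ℝ)
                * Real.exp (-(1 / μ) * (((n+1 : ℕ) : ℝ) * (((n+1 : ℕ) : ℝ) - 1) / 2)
                    / min (R : ℝ) (T : ℝ)) := by
                push_cast
                ring_nf
    have hfinal := htele r hr le_rfl
    -- numerator value
    have hnum_eq : (((graphsWithEdges k m).filter fun s => edgesOf s A = M + r).card : ℝ)
        = (T.choose (M + r) : ℝ) * (R.choose (m - (M + r)) : ℝ) := by
      rw [hcount (M + r) hcase]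
      push_cast
      ring
    -- bound count(M+1) by total
    have hg1 : (T.choose (M + 1) : ℝ) * (R.choose (m - (M + 1)) : ℝ) ≤ (S.choose m : ℝ) := by
      have h1 : T.choose (M + 1) * R.choose (m - (M + 1)) ≤ S.choose m := by
        rw [← hcount (M + 1) (by omega), ← hgcard]
        exact Finset.card_le_card (Finset.filter_subset _ _)
      exact_mod_cast h1
    rw [herProb, hgcard, div_le_iff₀ (by exact_mod_cast hSm_pos)]
    have hmn_cast : ((min R T : ℕ) : ℝ) = min (R : ℝ) (T : ℝ) := by
      push_cast [Nat.cast_min]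
      rfl
    have hexp_eq : Real.exp (-(1 / μ) * (r : ℝ) * ((r : ℝ) - 1) / (2 * ((min R T : ℕ) : ℝ)))
        = Real.exp (-(1 / μ) * ((r : ℝ) * ((r : ℝ) - 1) / 2) / min (R : ℝ) (T : ℝ)) := by
      rw [hmn_cast]
      congr 1
      have hT0 : (0:ℝ) < (T:ℝ) := by exact_mod_cast hT1
      have hR0 : (0:ℝ) < (R:ℝ) := by exact_mod_cast (show 0 < R by omega)
      have hmn0 : (0:ℝ) < min (R : ℝ) (T : ℝ) := lt_min hR0 hT0
      field_simp
    rw [hnum_eq, hexp_eq]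
    calc (T.choose (M + r) : ℝ) * (R.choose (m - (M + r)) : ℝ)
        ≤ (T.choose (M + 1) : ℝ) * (R.choose (m - (M + 1)) : ℝ)
          * Real.exp (-(1 / μ) * ((r : ℝ) * ((r : ℝ) - 1) / 2) / min (R : ℝ) (T : ℝ)) := hfinal
      _ ≤ (S.choose m : ℝ)
          * Real.exp (-(1 / μ) * ((r : ℝ) * ((r : ℝ) - 1) / 2) / min (R : ℝ) (T : ℝ)) :=
          mul_le_mul_of_nonneg_right hg1 (Real.exp_pos _).le
      _ = Real.exp (-(1 / μ) * ((r : ℝ) * ((r : ℝ) - 1) / 2) / min (R : ℝ) (T : ℝ))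
          * (S.choose m : ℝ) := by ring
  · -- degenerate case: the event is empty
    have hempty : ((graphsWithEdges k m).filter fun s => edgesOf s A = M + r) = ∅ := by
      apply Finset.filter_eq_empty_iff.2
      intro s hs
      rw [graphsWithEdges, Finset.mem_powersetCard] at hs
      have h1 : edgesOf s A ≤ s.card := Finset.card_filter_le _ _
      omega
    rw [herProb, hempty]
    simp only [Finset.card_empty, Nat.cast_zero, zero_div]
    exact hexp_pos.le
end

section
/- Let 0<p<γ<1 be fixed reals. For integers k ≥ 3 and ℓ ∈ {2,…,k−1}, set S = binom(k,2), T = binom(ℓ,2), R = S−T, and for integers 0 ≤ L ≤ T define R_ℓ(L) = binom(T,L)·binom(R, ⌈γS⌉−L)²·binom(S, ⌈γS⌉)^{−2}·p^{−L}·(1−p)^{L−T}. Then there exists k₀ such that for all k ≥ k₀, all ℓ ∈ {2,…,k−1}, and all integers r with 0 ≤ r ≤ ⌊γT⌋, one has R_ℓ(⌊γT⌋ − r) ≤ R_ℓ(⌊γT⌋). -/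
/-- Binomial coefficient `C(a,b)` for an integer `b`, with the convention that it is `0`
when `b < 0` (or `b > a`). -/
def chooseZ (a : ℕ) (b : ℤ) : ℕ :=
  if 0 ≤ b then a.choose b.toNat else 0

/-- `R_ℓ(L) = C(T,L)·C(R,⌈γS⌉−L)²·C(S,⌈γS⌉)⁻²·p^{−L}·(1−p)^{L−T}`, where `S = C(k,2)`,
`T = C(ℓ,2)` and `R = S − T`. -/
noncomputable def Rquot (γ p : ℝ) (k ℓ L : ℕ) : ℝ :=
  ((ℓ.choose 2).choose L : ℝ) *
    ((chooseZ (k.choose 2 - ℓ.choose 2) ((⌈γ * (k.choose 2 : ℝ)⌉₊ : ℤ) - (L : ℤ)) : ℝ)) ^ 2 *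
    (((k.choose 2).choose ⌈γ * (k.choose 2 : ℝ)⌉₊ : ℝ)) ⁻¹ ^ 2 *
    p ^ (-(L : ℤ)) * (1 - p) ^ ((L : ℤ) - (ℓ.choose 2 : ℤ))

set_option maxHeartbeats 1000000 in
lemma Rquot_step (p γ : ℝ) (hp : 0 < p) (hpγ : p < γ) (hγ : γ < 1)
    (k ℓ L : ℕ) (hℓ : 2 ≤ ℓ) (hk : ℓ + 1 ≤ k)
    (hL : L + 1 ≤ ⌊γ * (ℓ.choose 2 : ℝ)⌋₊) :
    Rquot γ p k ℓ L ≤ Rquot γ p k ℓ (L + 1) := by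
  have hγ0 : 0 < γ := hp.trans hpγ
  have hp1 : p < 1 := hpγ.trans hγ
  set T := ℓ.choose 2 with hT
  set S := k.choose 2 with hS
  set m := ⌈γ * (S : ℝ)⌉₊ with hm
  -- T < S
  have hTS : T < S := by
    rw [hT, hS]
    have h1 : (ℓ + 1).choose 2 = ℓ.choose 1 + ℓ.choose 2 := Nat.choose_succ_succ ℓ 1
    rw [Nat.choose_one_right] at h1
    have h2 := Nat.choose_le_choose 2 hk
    omega
  -- real bounds
  have hfloor : (⌊γ * (T : ℝ)⌋₊ : ℝ) ≤ γ * T :=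
    Nat.floor_le (by positivity)
  have hL1 : (L : ℝ) + 1 ≤ γ * T := by
    have : ((L + 1 : ℕ) : ℝ) ≤ (⌊γ * (T : ℝ)⌋₊ : ℝ) := Nat.cast_le.2 hL
    push_cast at this; linarith
  have hceil : γ * (S : ℝ) ≤ m := Nat.le_ceil _
  have hTSR : (T : ℝ) < S := Nat.cast_lt.2 hTS
  have hLm : L + 1 < m := by
    have h : ((L + 1 : ℕ) : ℝ) < (m : ℝ) := by push_cast; nlinarith
    exact_mod_cast h
  have hLT : L + 1 < T := by
    have h : ((L + 1 : ℕ) : ℝ) < (T : ℝ) := by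
      have hT1 : 0 < T := Nat.choose_pos hℓ
      have h1T : (1:ℝ) ≤ (T : ℝ) := by exact_mod_cast hT1
      push_cast; nlinarith
    exact_mod_cast h
  set R := S - T with hR
  have hRcast : (R : ℝ) = (S : ℝ) - T := by
    rw [hR]; push_cast [Nat.cast_sub hTS.le]; ring
  -- rewrite chooseZ
  have hcz1 : chooseZ R ((m : ℤ) - (L : ℤ)) = R.choose (m - L) := by
    rw [chooseZ, if_pos (by omega : (0:ℤ) ≤ (m : ℤ) - L), Int.toNat_sub]
  have hcz2 : chooseZ R ((m : ℤ) - ((L + 1 : ℕ) : ℤ)) = R.choose (m - (L + 1)) := by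
    rw [chooseZ, if_pos (by push_cast; omega : (0:ℤ) ≤ (m : ℤ) - ((L + 1 : ℕ) : ℤ))]
    push_cast
    rw [(by push_cast; ring : (m : ℤ) - ((L : ℤ) + 1) = (m : ℤ) - ((L + 1 : ℕ) : ℤ)),
      Int.toNat_sub]
  -- core inequality on the choose part
  set a : ℝ := (T.choose L : ℝ) with ha
  set a' : ℝ := (T.choose (L + 1) : ℝ) with ha'
  set b : ℝ := (R.choose (m - L) : ℝ) with hb
  set b' : ℝ := (R.choose (m - (L + 1)) : ℝ) with hb'
  have ha0 : 0 ≤ a := by positivity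
  have hb'0 : 0 ≤ b' := by positivity
  have hcore : a * b ^ 2 * p ≤ a' * b' ^ 2 * (1 - p) := by
    by_cases hbR : m - L ≤ R
    · -- set j = m - L - 1
      have hj : m - (L + 1) + 1 = m - L := by omega
      have hjR : m - (L + 1) < R := by omega
      -- nat identities
      have e1 : T.choose (L + 1) * (L + 1) = T.choose L * (T - L) :=
        Nat.choose_succ_right_eq T L
      have e2 : R.choose (m - L) * (m - L) = R.choose (m - (L + 1)) * (R - (m - (L + 1))) := by
        conv_lhs => rw [← hj]
        exact Nat.choose_succ_right_eq R (m - (L + 1))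
      -- cast to ℝ
      have e1' : a' * ((L : ℝ) + 1) = a * ((T : ℝ) - L) := by
        have := congrArg (fun n : ℕ => (n : ℝ)) e1
        push_cast [Nat.cast_sub (by omega : L ≤ T)] at this
        rw [ha, ha']; push_cast; linarith
      have e2' : b * ((m : ℝ) - L) = b' * ((R : ℝ) - ((m : ℝ) - L - 1)) := by
        have := congrArg (fun n : ℕ => (n : ℝ)) e2
        push_cast [Nat.cast_sub (by omega : L ≤ m), Nat.cast_sub (by omega : L + 1 ≤ m),
          Nat.cast_sub hjR.le] at this
        rw [hb, hb']; push_cast; linarith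
      -- key real inequality
      have hRj : ((R : ℝ) - ((m : ℝ) - L - 1)) ≤ (1 - γ) * R := by
        nlinarith
      have hRj0 : 0 ≤ ((R : ℝ) - ((m : ℝ) - L - 1)) := by
        have : ((m - (L+1) : ℕ) : ℝ) < (R : ℝ) := Nat.cast_lt.2 hjR
        push_cast [Nat.cast_sub (by omega : L + 1 ≤ m)] at this
        linarith
      have hTL : (1 - γ) * T ≤ (T : ℝ) - L := by nlinarith
      have hmL : γ * (R : ℝ) ≤ (m : ℝ) - L := by nlinarith
      have hmL0 : 0 < (m : ℝ) - L := by
        have : (L : ℝ) < m := by exact_mod_cast Nat.cast_lt.2 (by omega : L < m)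
        linarith
      have hR0 : 0 ≤ (R : ℝ) := by positivity
      have hkey : ((L : ℝ) + 1) * ((R : ℝ) - ((m : ℝ) - L - 1)) ^ 2 * p
          ≤ ((T : ℝ) - L) * ((m : ℝ) - L) ^ 2 * (1 - p) := by
        calc ((L : ℝ) + 1) * ((R : ℝ) - ((m : ℝ) - L - 1)) ^ 2 * p
            ≤ (γ * T) * ((1 - γ) * R) ^ 2 * p := by
              have hγT : (0:ℝ) ≤ γ * T := by positivity
              exact mul_le_mul (mul_le_mul hL1 (pow_le_pow_left₀ hRj0 hRj 2)
                (sq_nonneg _) hγT) le_rfl hp.le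
                (mul_nonneg hγT (sq_nonneg _))
        _ ≤ ((1 - γ) * T) * (γ * R) ^ 2 * (1 - p) := by
              have h1 : (1 - γ) * p ≤ γ * (1 - p) := by nlinarith
              have h2 : 0 ≤ γ * (1 - γ) * T * R ^ 2 :=
                mul_nonneg (mul_nonneg (mul_nonneg hγ0.le (by linarith)) (Nat.cast_nonneg T))
                  (sq_nonneg _)
              nlinarith [mul_le_mul_of_nonneg_left h1 h2]
        _ ≤ ((T : ℝ) - L) * ((m : ℝ) - L) ^ 2 * (1 - p) := by
              have hTL0 : (0:ℝ) ≤ (1 - γ) * T := by nlinarith [Nat.cast_nonneg (α := ℝ) T]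
              exact mul_le_mul (mul_le_mul hTL (pow_le_pow_left₀ (by positivity) hmL 2)
                (sq_nonneg _) (by linarith)) le_rfl (by linarith)
                (mul_nonneg (by linarith) (sq_nonneg _))
      -- combine
      have hmain : ((m : ℝ) - L) ^ 2 * ((L : ℝ) + 1) * (a * b ^ 2 * p)
          ≤ ((m : ℝ) - L) ^ 2 * ((L : ℝ) + 1) * (a' * b' ^ 2 * (1 - p)) := by
        have step1 : ((m : ℝ) - L) ^ 2 * ((L : ℝ) + 1) * (a * b ^ 2 * p)
            = a * b' ^ 2 * (((L : ℝ) + 1) * ((R : ℝ) - ((m : ℝ) - L - 1)) ^ 2 * p) := by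
          linear_combination (a * ((L : ℝ) + 1) * p *
            (b * ((m : ℝ) - L) + b' * ((R : ℝ) - ((m : ℝ) - L - 1)))) * e2'
        have step3 : a * b' ^ 2 * (((T : ℝ) - L) * ((m : ℝ) - L) ^ 2 * (1 - p))
            = ((m : ℝ) - L) ^ 2 * ((L : ℝ) + 1) * (a' * b' ^ 2 * (1 - p)) := by
          linear_combination (-(b' ^ 2 * (1 - p) * ((m : ℝ) - L) ^ 2)) * e1'
        calc ((m : ℝ) - L) ^ 2 * ((L : ℝ) + 1) * (a * b ^ 2 * p)
            = a * b' ^ 2 * (((L : ℝ) + 1) * ((R : ℝ) - ((m : ℝ) - L - 1)) ^ 2 * p) := step1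
          _ ≤ a * b' ^ 2 * (((T : ℝ) - L) * ((m : ℝ) - L) ^ 2 * (1 - p)) := by
              apply mul_le_mul_of_nonneg_left hkey (by positivity)
          _ = ((m : ℝ) - L) ^ 2 * ((L : ℝ) + 1) * (a' * b' ^ 2 * (1 - p)) := step3
      have hpos : 0 < ((m : ℝ) - L) ^ 2 * ((L : ℝ) + 1) := by positivity
      exact le_of_mul_le_mul_left (by linarith [hmain]) hpos
    · have : b = 0 := by
        rw [hb, Nat.choose_eq_zero_of_lt (by omega)]; norm_num
      rw [this]
      have : (0:ℝ) ≤ a' * b' ^ 2 * (1 - p) :=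
        mul_nonneg (mul_nonneg (by positivity) (sq_nonneg _)) (by linarith)
      nlinarith
  -- lift to Rquot
  have hfac : (0:ℝ) ≤ ((S.choose m : ℝ))⁻¹ ^ 2 := by positivity
  rw [Rquot, Rquot]
  rw [show k.choose 2 = S from rfl, show ℓ.choose 2 = T from rfl, ← hm, hcz1, hcz2]
  rw [← ha, ← ha', ← hb, ← hb']
  have hz1 : p ^ (-((L + 1 : ℕ) : ℤ)) = p ^ (-(L : ℤ)) * p⁻¹ := by
    push_cast
    rw [(by ring : -((L : ℤ) + 1) = -(L : ℤ) + (-1)), zpow_add₀ (ne_of_gt hp)]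
    norm_num
  have hz2 : (1 - p) ^ (((L + 1 : ℕ) : ℤ) - (T : ℤ)) = (1 - p) ^ ((L : ℤ) - (T : ℤ)) * (1 - p) := by
    push_cast
    rw [(by ring : (L : ℤ) + 1 - (T : ℤ) = ((L : ℤ) - (T : ℤ)) + 1), zpow_add₀ (by linarith : (1:ℝ) - p ≠ 0)]
    norm_num
  rw [hz1, hz2]
  have hx : 0 < p ^ (-(L : ℤ)) := zpow_pos hp _
  have hy : 0 < (1 - p) ^ ((L : ℤ) - (T : ℤ)) := zpow_pos (by linarith) _
  set c : ℝ := ((S.choose m : ℝ))⁻¹ ^ 2 with hc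
  set x : ℝ := p ^ (-(L : ℤ)) with hxdef
  set y : ℝ := (1 - p) ^ ((L : ℤ) - (T : ℤ)) with hydef
  have hxy : 0 ≤ c * x * y * p⁻¹ := by positivity
  have := mul_le_mul_of_nonneg_left hcore hxy
  calc a * b ^ 2 * c * x * y = (c * x * y * p⁻¹) * (a * b ^ 2 * p) := by
        field_simp
    _ ≤ (c * x * y * p⁻¹) * (a' * b' ^ 2 * (1 - p)) := this
    _ = a' * b' ^ 2 * c * (x * p⁻¹) * (y * (1 - p)) := by
        field_simp

lemma Rquot_nonneg (p γ : ℝ) (hp : 0 < p) (hp1 : p < 1) (k ℓ L : ℕ) :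
    0 ≤ Rquot γ p k ℓ L := by
  have h1p : (0:ℝ) < 1 - p := by linarith
  rw [Rquot]
  positivity

/-- Lemma 5, inequality (8) of the paper: with `T = C(ℓ,2)`, for all large `k`,
all `ℓ ∈ {2,…,k−1}` and all integers `0 ≤ r ≤ ⌊γT⌋`,
`R_ℓ(⌊γT⌋ − r) ≤ R_ℓ(⌊γT⌋)`. -/
theorem Rquot_lower_part_bound
    (p γ : ℝ) (hp : 0 < p) (hpγ : p < γ) (hγ : γ < 1) :
    ∃ k₀ : ℕ, ∀ k ≥ k₀, ∀ ℓ : ℕ, 2 ≤ ℓ → ℓ + 1 ≤ k →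
      ∀ r : ℕ, r ≤ ⌊γ * (ℓ.choose 2 : ℝ)⌋₊ →
        Rquot γ p k ℓ (⌊γ * (ℓ.choose 2 : ℝ)⌋₊ - r)
          ≤ Rquot γ p k ℓ ⌊γ * (ℓ.choose 2 : ℝ)⌋₊ := by
  refine ⟨0, fun k _ ℓ hℓ hk r => ?_⟩
  set N := ⌊γ * (ℓ.choose 2 : ℝ)⌋₊ with hN
  induction r with
  | zero => intro _; simp
  | succ n ih =>
    intro hr
    have hn : n ≤ N := by omega
    have heq : (N - (n + 1)) + 1 = N - n := by omega
    have hstep : Rquot γ p k ℓ (N - (n + 1)) ≤ Rquot γ p k ℓ ((N - (n + 1)) + 1) :=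
      Rquot_step p γ hp hpγ hγ k ℓ (N - (n + 1)) hℓ hk (by omega)
    rw [heq] at hstep
    exact hstep.trans (ih hn)
end
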